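/- arXiv:2505.01092 — 9 statements merged into one kernel-verified Lean document; each statement's English description precedes it below -/
import Mathlib

section
/- Let x ∈ s, let v* ∈ s be a minimizer over s of v ↦ ⟨∇f(x), v⟩ + g(v), and set d := v* − x. Then F(x + t d) ≤ F(x) − t G(x) + o(t) as t → 0+; precisely, for every ε > 0 there exists δ ∈ (0, 1] such that F(x + t d) ≤ F(x) − t G(x) + ε t for all t ∈ (0, δ]. -/
open scoped RealInnerProductSpace

/-- The Frank–Wolfe gap `G(x) = sup_{v ∈ s} (⟪∇f(x), x − v⟫ + g(x) − g(v))`. -/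
noncomputable def FWgap {E : Type*} [NormedAddCommGroup E] [InnerProductSpace ℝ E] [CompleteSpace E]
    (f g : E → ℝ) (s : Set E) (x : E) : ℝ :=
  ⨆ v : s, (⟪gradient f x, x - (v : E)⟫ + g x - g (v : E))

open scoped Topology
open Filter Set

/-!
Along the segment `t ↦ x + t d`, `f` is differentiable at `t = 0` with slope `⟪∇f(x), d⟫`, so
`f(x + t d) ≤ f(x) + t ⟪∇f(x), d⟫ + o(t)`, while convexity of `g` gives
`g(x + t d) ≤ g(x) + t (g(v*) − g(x))` for `t ∈ [0, 1]`. Since `v*` minimizes the linearized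
objective, the supremum defining `G(x)` is attained at `v*`, i.e.
`G(x) = −⟪∇f(x), d⟫ + g(x) − g(v*)`; adding the two bounds gives the claim.
-/

lemma exists_Ioc_forall_of_eventually_nhdsGT {p : ℝ → Prop} (h : ∀ᶠ t in 𝓝[>] 0, p t) :
    ∃ δ ∈ Ioc (0 : ℝ) 1, ∀ t ∈ Ioc 0 δ, p t := by
  obtain ⟨δ, hδ, hsub⟩ := mem_nhdsGT_iff_exists_Ioc_subset.1 h
  exact ⟨min δ 1, ⟨lt_min hδ one_pos, min_le_right _ _⟩,
    fun t ht => hsub ⟨ht.1, ht.2.trans (min_le_left _ _)⟩⟩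

lemma HasDerivAt.eventually_nhdsGT_le_add_mul {φ : ℝ → ℝ} {φ' ε : ℝ} (h : HasDerivAt φ φ' 0)
    (hε : 0 < ε) : ∀ᶠ t in 𝓝[>] 0, φ t ≤ φ 0 + t * φ' + ε * t := by
  have hsmall := (hasDerivAt_iff_isLittleO.1 h).def hε
  filter_upwards [nhdsWithin_le_nhds hsmall, self_mem_nhdsWithin] with t ht (htpos : 0 < t)
  rw [sub_zero, smul_eq_mul, Real.norm_eq_abs, Real.norm_eq_abs, abs_of_pos htpos] at ht
  linarith [le_abs_self (φ t - φ 0 - t * φ')]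

lemma HasGradientAt.hasDerivAt_add_smul {E : Type*} [NormedAddCommGroup E]
    [InnerProductSpace ℝ E] [CompleteSpace E] {f : E → ℝ} {f' x : E} (hf : HasGradientAt f f' x)
    (d : E) : HasDerivAt (fun t : ℝ => f (x + t • d)) ⟪f', d⟫ 0 := by
  have hline : HasDerivAt (fun t : ℝ => x + t • d) d 0 := by
    simpa using ((hasDerivAt_id (0 : ℝ)).smul_const d).const_add x
  have hf₀ : HasFDerivAt f (InnerProductSpace.toDual ℝ E f') (x + (0 : ℝ) • d) := by
    simpa using hf.hasFDerivAt
  exact hf₀.comp_hasDerivAt (0 : ℝ) hline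

lemma ConvexOn.le_add_mul_sub {E : Type*} [AddCommGroup E] [Module ℝ E] {s : Set E} {g : E → ℝ}
    (hg : ConvexOn ℝ s g) {x y : E} (hx : x ∈ s) (hy : y ∈ s) {t : ℝ} (ht₀ : 0 ≤ t)
    (ht₁ : t ≤ 1) : g (x + t • (y - x)) ≤ g x + t * (g y - g x) := by
  have hcomb := hg.2 hx hy (sub_nonneg.2 ht₁) ht₀ (sub_add_cancel 1 t)
  rw [show (1 - t) • x + t • y = x + t • (y - x) by module, smul_eq_mul, smul_eq_mul] at hcomb
  linarith

lemma FWgap_eq_of_isMinOn {E : Type*} [NormedAddCommGroup E] [InnerProductSpace ℝ E]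
    [CompleteSpace E] {f g : E → ℝ} {s : Set E} {x vstar : E} (hvstar : vstar ∈ s)
    (hmin : IsMinOn (fun w => ⟪gradient f x, w⟫ + g w) s vstar) :
    FWgap f g s x = ⟪gradient f x, x - vstar⟫ + g x - g vstar := by
  have : Nonempty s := ⟨⟨vstar, hvstar⟩⟩
  have hle : ∀ v : s, ⟪gradient f x, x - v⟫ + g x - g v
      ≤ ⟪gradient f x, x - vstar⟫ + g x - g vstar := fun v => by
    have := isMinOn_iff.1 hmin v v.2
    simp only [inner_sub_right] at this ⊢
    linarith
  exact le_antisymm (ciSup_le hle) (le_ciSup ⟨_, forall_mem_range.2 hle⟩ ⟨vstar, hvstar⟩)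

theorem descent_property_general
    {E : Type*} [NormedAddCommGroup E] [InnerProductSpace ℝ E] [FiniteDimensional ℝ E]
    (s : Set E)
    (g : E → ℝ) (hg_cv : ConvexOn ℝ s g)
    (f : E → ℝ) (hf : ∃ u : Set E, IsOpen u ∧ s ⊆ u ∧ ContDiffOn ℝ 1 f u)
    (x : E) (hx : x ∈ s)
    (vstar : E) (hvstar : vstar ∈ s)
    (hmin : ∀ w ∈ s, ⟪gradient f x, vstar⟫ + g vstar ≤ ⟪gradient f x, w⟫ + g w)
    (d : E) (hd : d = vstar - x) :
    ∀ ε > (0 : ℝ), ∃ δ ∈ Set.Ioc (0 : ℝ) 1, ∀ t ∈ Set.Ioc (0 : ℝ) δ,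
      f (x + t • d) + g (x + t • d) ≤ (f x + g x) - t * FWgap f g s x + ε * t := by
  intro ε hε
  subst hd
  obtain ⟨u, hu, hsu, hfu⟩ := hf
  have hgrad : HasGradientAt f (gradient f x) x :=
    ((hfu.differentiableOn one_ne_zero).differentiableAt (hu.mem_nhds (hsu hx))).hasGradientAt
  have hf_bound := (hgrad.hasDerivAt_add_smul (vstar - x)).eventually_nhdsGT_le_add_mul hε
  apply exists_Ioc_forall_of_eventually_nhdsGT
  filter_upwards [hf_bound, Ioo_mem_nhdsGT one_pos] with t hft ht
  rw [zero_smul, add_zero] at hft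
  have hgt := hg_cv.le_add_mul_sub hx hvstar ht.1.le ht.2.le
  rw [FWgap_eq_of_isMinOn hvstar (isMinOn_iff.2 hmin), ← neg_sub vstar x, inner_neg_right]
  linarith

/-- **Lemma: descent property.** Let `x ∈ s`, let `v* ∈ s` minimize
`v ↦ ⟪∇f(x), v⟫ + g v` over `s`, and set `d := v* − x`. Then
`F(x + t d) ≤ F(x) − t G(x) + o(t)` as `t → 0+`: for every `ε > 0` there exists
`δ ∈ (0, 1]` with `F(x + t d) ≤ F(x) − t G(x) + ε t` for all `t ∈ (0, δ]`. -/
theorem descent_property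
    {E : Type*} [NormedAddCommGroup E] [InnerProductSpace ℝ E] [FiniteDimensional ℝ E]
    (s : Set E) (hs_ne : s.Nonempty) (hs_cl : IsClosed s) (hs_cv : Convex ℝ s)
    (g : E → ℝ) (hg_cv : ConvexOn ℝ s g) (hg_lsc : LowerSemicontinuousOn g s)
    (hg_sc : ∀ M : ℝ, ∃ R : ℝ, ∀ z ∈ s, R ≤ ‖z‖ → M ≤ g z / ‖z‖)
    (f : E → ℝ) (hf : ∃ u : Set E, IsOpen u ∧ s ⊆ u ∧ ContDiffOn ℝ 1 f u)
    (hF_bdd : BddBelow ((fun z => f z + g z) '' s))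
    (x : E) (hx : x ∈ s)
    (vstar : E) (hvstar : vstar ∈ s)
    (hmin : ∀ w ∈ s, ⟪gradient f x, vstar⟫ + g vstar ≤ ⟪gradient f x, w⟫ + g w)
    (d : E) (hd : d = vstar - x) :
    ∀ ε > (0 : ℝ), ∃ δ ∈ Set.Ioc (0 : ℝ) 1, ∀ t ∈ Set.Ioc (0 : ℝ) δ,
      f (x + t • d) + g (x + t • d) ≤ (f x + g x) - t * FWgap f g s x + ε * t :=
  descent_property_general s g hg_cv f hf x hx vstar hvstar hmin d hd
end

section
/- Let {x^k}, {F_k}, {i_k} be generated by Algorithm 1. Then the sequence {F_k} is monotonically nonincreasing and bounded from below by inf_{x ∈ s} F(x), and for all k ≥ 0 it holds that F(x^{k+1}) ≤ F_{k+1} ≤ F_k − p σ β^{i_k} G(x^k). -/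
open scoped RealInnerProductSpace

/-- **Proposition: basic properties of Algorithm 1, items (i).**
The sequence `{F_k}` is monotonically nonincreasing and bounded from below by
`inf_{x ∈ s} F(x)`, and `F(x^{k+1}) ≤ F_{k+1} ≤ F_k − p σ β^{i_k} G(x^k)` for all `k`. -/
theorem alg1_monotone_bounds
    {E : Type*} [NormedAddCommGroup E] [InnerProductSpace ℝ E] [FiniteDimensional ℝ E]
    (s : Set E) (hs_ne : s.Nonempty) (hs_cl : IsClosed s) (hs_cv : Convex ℝ s)
    (g : E → ℝ) (hg_cv : ConvexOn ℝ s g) (hg_lsc : LowerSemicontinuousOn g s)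
    (hg_sc : ∀ M : ℝ, ∃ R : ℝ, ∀ z ∈ s, R ≤ ‖z‖ → M ≤ g z / ‖z‖)
    (f : E → ℝ) (hf : ∃ u : Set E, IsOpen u ∧ s ⊆ u ∧ ContDiffOn ℝ 1 f u)
    (hF_bdd : BddBelow ((fun z => f z + g z) '' s))
    (β σ p : ℝ) (hβ : β ∈ Set.Ioo (0 : ℝ) 1) (hσ : σ ∈ Set.Ioo (0 : ℝ) 1)
    (hp : p ∈ Set.Ioc (0 : ℝ) 1)
    (x v d : ℕ → E) (ik : ℕ → ℕ) (Fs ps : ℕ → ℝ)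
    (hx0 : x 0 ∈ s)
    (hv : ∀ k, v k ∈ s ∧ ∀ w ∈ s,
      ⟪gradient f (x k), v k⟫ + g (v k) ≤ ⟪gradient f (x k), w⟫ + g w)
    (hd : ∀ k, d k = v k - x k)
    (hik : ∀ k,
      (f (x k + β ^ ik k • d k) + g (x k + β ^ ik k • d k)
          ≤ Fs k - σ * β ^ ik k * FWgap f g s (x k))
      ∧ ∀ j < ik k,
        ¬ (f (x k + β ^ j • d k) + g (x k + β ^ j • d k)
          ≤ Fs k - σ * β ^ j * FWgap f g s (x k)))
    (hxsucc : ∀ k, x (k + 1) = x k + β ^ ik k • d k)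
    (hF0 : Fs 0 = f (x 0) + g (x 0))
    (hps : ∀ k, ps (k + 1) ∈ Set.Icc p 1)
    (hFsucc : ∀ k, Fs (k + 1)
      = ps (k + 1) * (f (x (k + 1)) + g (x (k + 1))) + (1 - ps (k + 1)) * Fs k)
    :
    (∀ k l : ℕ, k ≤ l → Fs l ≤ Fs k) ∧
    (∀ k, sInf ((fun z => f z + g z) '' s) ≤ Fs k) ∧
    (∀ k, f (x (k + 1)) + g (x (k + 1)) ≤ Fs (k + 1) ∧
      Fs (k + 1) ≤ Fs k - p * σ * β ^ ik k * FWgap f g s (x k)) := by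

  obtain ⟨hβ0, hβ1⟩ := hβ
  obtain ⟨hσ0, hσ1⟩ := hσ
  obtain ⟨hp0, hp1⟩ := hp
  -- x k ∈ s for all k
  have hxs : ∀ k, x k ∈ s := by
    intro k
    induction k with
    | zero => exact hx0
    | succ k ih =>
      have ht0 : (0:ℝ) ≤ β ^ ik k := le_of_lt (pow_pos hβ0 _)
      have ht1 : β ^ ik k ≤ 1 := pow_le_one₀ (le_of_lt hβ0) (le_of_lt hβ1)
      have : x (k+1) = (1 - β ^ ik k) • x k + (β ^ ik k) • v k := by
        rw [hxsucc k, hd k]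
        module
      rw [this]
      exact hs_cv ih (hv k).1 (by linarith) ht0 (by ring)
  -- FWgap nonneg
  have hG : ∀ k, 0 ≤ FWgap f g s (x k) := by
    intro k
    have hbdd : BddAbove (Set.range fun w : s =>
        (⟪gradient f (x k), x k - (w : E)⟫ + g (x k) - g (w : E))) := by
      refine ⟨⟪gradient f (x k), x k⟫ + g (x k) - (⟪gradient f (x k), v k⟫ + g (v k)), ?_⟩
      rintro y ⟨w, rfl⟩
      have := (hv k).2 (w : E) w.2
      simp only [inner_sub_right]
      linarith
    have h0 : (0:ℝ) ≤ ⟪gradient f (x k), x k - x k⟫ + g (x k) - g (x k) := by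
      simp
    calc (0:ℝ) ≤ ⟪gradient f (x k), x k - x k⟫ + g (x k) - g (x k) := h0
      _ ≤ FWgap f g s (x k) := le_ciSup hbdd ⟨x k, hxs k⟩
  -- key per-step facts
  have hkey : ∀ k, f (x (k + 1)) + g (x (k + 1)) ≤ Fs (k + 1) ∧
      Fs (k + 1) ≤ Fs k - p * σ * β ^ ik k * FWgap f g s (x k) := by
    intro k
    have hstep : f (x (k+1)) + g (x (k+1)) ≤ Fs k - σ * β ^ ik k * FWgap f g s (x k) := by
      rw [hxsucc k]; exact (hik k).1
    have hterm : 0 ≤ σ * β ^ ik k * FWgap f g s (x k) :=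
      mul_nonneg (mul_nonneg (le_of_lt hσ0) (le_of_lt (pow_pos hβ0 _))) (hG k)
    have hFle : f (x (k+1)) + g (x (k+1)) ≤ Fs k := by linarith
    obtain ⟨hpk1, hpk2⟩ := hps k
    have hE := hFsucc k
    constructor
    · nlinarith [mul_nonneg (sub_nonneg.2 hpk2) (sub_nonneg.2 hFle)]
    · nlinarith [mul_le_mul_of_nonneg_left hterm (le_of_lt hp0),
        mul_le_mul_of_nonneg_right hpk1 hterm,
        mul_le_mul_of_nonneg_left
          (show σ * β ^ ik k * FWgap f g s (x k) ≤ Fs k - (f (x (k+1)) + g (x (k+1))) by linarith)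
          (le_trans (le_of_lt hp0) hpk1)]
  have hmono1 : ∀ k, Fs (k+1) ≤ Fs k := by
    intro k
    have h := (hkey k).2
    have : 0 ≤ p * σ * β ^ ik k * FWgap f g s (x k) :=
      mul_nonneg (mul_nonneg (mul_nonneg (le_of_lt hp0) (le_of_lt hσ0))
        (le_of_lt (pow_pos hβ0 _))) (hG k)
    linarith
  have hmono : ∀ k l : ℕ, k ≤ l → Fs l ≤ Fs k := by
    intro k l hkl
    induction l, hkl using Nat.le_induction with
    | base => exact le_refl _
    | succ n hn ih => exact le_trans (hmono1 n) ih
  refine ⟨hmono, ?_, hkey⟩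
  intro k
  have hFx : ∀ k, f (x k) + g (x k) ≤ Fs k := by
    intro k
    cases k with
    | zero => exact le_of_eq hF0.symm
    | succ n => exact (hkey n).1
  exact le_trans (csInf_le hF_bdd ⟨x k, hxs k, rfl⟩) (hFx k)
end

section
/- Let {x^k} and {F_k} be generated by Algorithm 1. Then the sequences {F_k} and {F(x^k)} both converge, to the same finite value. -/
open scoped RealInnerProductSpace

open Filter in
/-- The sequences `{F_k}` and `{F(x^k)}` generated by Algorithm 1 both
converge, to the same finite value. -/
theorem alg1_Fk_and_F_converge_same_limit
    {E : Type*} [NormedAddCommGroup E] [InnerProductSpace ℝ E] [FiniteDimensional ℝ E]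
    (s : Set E) (hs_ne : s.Nonempty) (hs_cl : IsClosed s) (hs_cv : Convex ℝ s)
    (g : E → ℝ) (hg_cv : ConvexOn ℝ s g) (hg_lsc : LowerSemicontinuousOn g s)
    (hg_sc : ∀ M : ℝ, ∃ R : ℝ, ∀ z ∈ s, R ≤ ‖z‖ → M ≤ g z / ‖z‖)
    (f : E → ℝ) (hf : ∃ u : Set E, IsOpen u ∧ s ⊆ u ∧ ContDiffOn ℝ 1 f u)
    (hF_bdd : BddBelow ((fun z => f z + g z) '' s))
    (β σ p : ℝ) (hβ : β ∈ Set.Ioo (0 : ℝ) 1) (hσ : σ ∈ Set.Ioo (0 : ℝ) 1)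
    (hp : p ∈ Set.Ioc (0 : ℝ) 1)
    (x v d : ℕ → E) (ik : ℕ → ℕ) (Fs ps : ℕ → ℝ)
    (hx0 : x 0 ∈ s)
    (hv : ∀ k, v k ∈ s ∧ ∀ w ∈ s,
      ⟪gradient f (x k), v k⟫ + g (v k) ≤ ⟪gradient f (x k), w⟫ + g w)
    (hd : ∀ k, d k = v k - x k)
    (hik : ∀ k,
      (f (x k + β ^ ik k • d k) + g (x k + β ^ ik k • d k)
          ≤ Fs k - σ * β ^ ik k * FWgap f g s (x k))
      ∧ ∀ j < ik k,
        ¬ (f (x k + β ^ j • d k) + g (x k + β ^ j • d k)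
          ≤ Fs k - σ * β ^ j * FWgap f g s (x k)))
    (hxsucc : ∀ k, x (k + 1) = x k + β ^ ik k • d k)
    (hF0 : Fs 0 = f (x 0) + g (x 0))
    (hps : ∀ k, ps (k + 1) ∈ Set.Icc p 1)
    (hFsucc : ∀ k, Fs (k + 1)
      = ps (k + 1) * (f (x (k + 1)) + g (x (k + 1))) + (1 - ps (k + 1)) * Fs k)
    :
    ∃ L : ℝ, Filter.Tendsto Fs Filter.atTop (nhds L) ∧
      Filter.Tendsto (fun k => f (x k) + g (x k)) Filter.atTop (nhds L) := by
  obtain ⟨m, hm⟩ := hF_bdd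
  have hβ0 := hβ.1
  have hβ1 := hβ.2
  -- all iterates stay in s
  have hxk : ∀ k, x k ∈ s := by
    intro k
    induction k with
    | zero => exact hx0
    | succ k ih =>
      rw [hxsucc k, hd k]
      have ht0 : (0:ℝ) ≤ β ^ ik k := pow_nonneg hβ0.le _
      have ht1 : β ^ ik k ≤ 1 := pow_le_one₀ hβ0.le hβ1.le
      have heq : x k + β ^ ik k • (v k - x k)
          = (1 - β ^ ik k) • x k + β ^ ik k • v k := by
        rw [smul_sub, sub_smul, one_smul]; abel
      rw [heq]
      exact hs_cv ih (hv k).1 (by linarith) ht0 (by ring)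
  -- the Frank–Wolfe gap is nonnegative
  have hGnn : ∀ k, 0 ≤ FWgap f g s (x k) := by
    intro k
    have hbdd : BddAbove (Set.range fun w : s =>
        ⟪gradient f (x k), x k - (w:E)⟫ + g (x k) - g (w:E)) := by
      refine ⟨⟪gradient f (x k), x k⟫ + g (x k)
        - (⟪gradient f (x k), v k⟫ + g (v k)), ?_⟩
      rintro _ ⟨w, rfl⟩
      have h := (hv k).2 w w.2
      simp only [inner_sub_right]
      linarith
    have h0 : (0:ℝ) = ⟪gradient f (x k), x k - x k⟫ + g (x k) - g (x k) := by simp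
    calc (0:ℝ) = ⟪gradient f (x k), x k - ((⟨x k, hxk k⟩ : s) : E)⟫
          + g (x k) - g ((⟨x k, hxk k⟩ : s) : E) := h0
      _ ≤ FWgap f g s (x k) := le_ciSup hbdd (⟨x k, hxk k⟩ : s)
  -- descent
  have hFle : ∀ k, f (x (k+1)) + g (x (k+1)) ≤ Fs k := by
    intro k
    have h1 := (hik k).1
    have h2 : 0 ≤ σ * β ^ ik k * FWgap f g s (x k) :=
      mul_nonneg (mul_nonneg hσ.1.le (pow_nonneg hβ0.le _)) (hGnn k)
    rw [hxsucc k]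
    linarith
  have hanti : ∀ k, Fs (k+1) ≤ Fs k := by
    intro k
    rw [hFsucc k]
    have hpk := hps k
    nlinarith [hFle k, hpk.1, hpk.2, hp.1]
  have hmF : ∀ z ∈ s, m ≤ f z + g z := fun z hz => hm ⟨z, hz, rfl⟩
  have hFs_lb : ∀ k, m ≤ Fs k := by
    intro k
    induction k with
    | zero => rw [hF0]; exact hmF _ hx0
    | succ k ih =>
      rw [hFsucc k]
      have hpk := hps k
      nlinarith [hmF _ (hxk (k+1)), hpk.1, hpk.2, hp.1]
  -- convergence of Fs
  have hAnti : Antitone Fs := antitone_nat_of_succ_le hanti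
  have hBdd : BddBelow (Set.range Fs) := ⟨m, by rintro _ ⟨k, rfl⟩; exact hFs_lb k⟩
  set L : ℝ := ⨅ k, Fs k with hLdef
  have hL : Tendsto Fs atTop (nhds L) := tendsto_atTop_ciInf hAnti hBdd
  refine ⟨L, hL, ?_⟩
  -- squeeze F(x^{k+1}) between Fs k - (Fs k - Fs (k+1))/p and Fs k
  have hlow : ∀ k, Fs k - (Fs k - Fs (k+1))/p ≤ f (x (k+1)) + g (x (k+1)) := by
    intro k
    have hpk := hps k
    have h1 : Fs k - Fs (k+1) = ps (k+1) * (Fs k - (f (x (k+1)) + g (x (k+1)))) := by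
      rw [hFsucc k]; ring
    have h2 : p * (Fs k - (f (x (k+1)) + g (x (k+1)))) ≤ Fs k - Fs (k+1) := by
      rw [h1]
      exact mul_le_mul_of_nonneg_right hpk.1 (by linarith [hFle k])
    have h3 : Fs k - (f (x (k+1)) + g (x (k+1))) ≤ (Fs k - Fs (k+1))/p :=
      (le_div_iff₀ hp.1).mpr (by linarith)
    linarith
  have hLshift : Tendsto (fun k => Fs (k+1)) atTop (nhds L) :=
    hL.comp (tendsto_add_atTop_nat 1)
  have hlowlim : Tendsto (fun k => Fs k - (Fs k - Fs (k+1))/p) atTop (nhds L) := by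
    have : Tendsto (fun k => Fs k - (Fs k - Fs (k+1))/p) atTop
        (nhds (L - (L - L)/p)) := hL.sub ((hL.sub hLshift).div_const p)
    simpa using this
  have hsq : Tendsto (fun k => f (x (k+1)) + g (x (k+1))) atTop (nhds L) :=
    tendsto_of_tendsto_of_tendsto_of_le_of_le hlowlim hL hlow hFle
  exact (tendsto_add_atTop_iff_nat 1).mp hsq
end

section
/- Let {x^k} be generated by Algorithm 1. Then the whole sequence {x^k} is contained in the lower level set {x ∈ s : F(x) ≤ F(x⁰)}. -/
open scoped RealInnerProductSpace

open Set

theorem FWgap_nonneg {E : Type*} [NormedAddCommGroup E] [InnerProductSpace ℝ E] [CompleteSpace E]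
    {f g : E → ℝ} {s : Set E} {x : E} (hx : x ∈ s) : 0 ≤ FWgap f g s x := by
  by_cases hb : BddAbove (range fun v : s => ⟪gradient f x, x - (v : E)⟫ + g x - g (v : E))
  · simpa only [FWgap, sub_self, inner_zero_right, zero_add] using le_ciSup hb (⟨x, hx⟩ : s)
  · rw [FWgap, Real.iSup_of_not_bddAbove hb]

theorem antitone_of_le_of_eq_convex_comb {a b c : ℕ → ℝ} (hle : ∀ k, a (k + 1) ≤ b k)
    (hc : ∀ k, 0 ≤ c (k + 1))
    (hb : ∀ k, b (k + 1) = c (k + 1) * a (k + 1) + (1 - c (k + 1)) * b k) : Antitone b := by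
  refine antitone_nat_of_succ_le fun k => ?_
  have hdiff : b (k + 1) - b k = c (k + 1) * (a (k + 1) - b k) := by rw [hb k]; ring
  have hstep : c (k + 1) * (a (k + 1) - b k) ≤ 0 :=
    mul_nonpos_of_nonneg_of_nonpos (hc k) (sub_nonpos.mpr (hle k))
  linarith

theorem alg1_iterates_in_level_set_general
    {E : Type*} [NormedAddCommGroup E] [InnerProductSpace ℝ E] [FiniteDimensional ℝ E]
    (s : Set E) (hs_cv : Convex ℝ s)
    (g : E → ℝ)
    (f : E → ℝ)
    (β σ p : ℝ) (hβ : β ∈ Set.Ioo (0 : ℝ) 1) (hσ : σ ∈ Set.Ioo (0 : ℝ) 1)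
    (hp : p ∈ Set.Ioc (0 : ℝ) 1)
    (x v d : ℕ → E) (ik : ℕ → ℕ) (Fs ps : ℕ → ℝ)
    (hx0 : x 0 ∈ s)
    (hv : ∀ k, v k ∈ s ∧ ∀ w ∈ s,
      ⟪gradient f (x k), v k⟫ + g (v k) ≤ ⟪gradient f (x k), w⟫ + g w)
    (hd : ∀ k, d k = v k - x k)
    (hik : ∀ k,
      (f (x k + β ^ ik k • d k) + g (x k + β ^ ik k • d k)
          ≤ Fs k - σ * β ^ ik k * FWgap f g s (x k))
      ∧ ∀ j < ik k,
        ¬ (f (x k + β ^ j • d k) + g (x k + β ^ j • d k)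
          ≤ Fs k - σ * β ^ j * FWgap f g s (x k)))
    (hxsucc : ∀ k, x (k + 1) = x k + β ^ ik k • d k)
    (hF0 : Fs 0 = f (x 0) + g (x 0))
    (hps : ∀ k, ps (k + 1) ∈ Set.Icc p 1)
    (hFsucc : ∀ k, Fs (k + 1)
      = ps (k + 1) * (f (x (k + 1)) + g (x (k + 1))) + (1 - ps (k + 1)) * Fs k)
    :
    ∀ k, x k ∈ {z ∈ s | f z + g z ≤ f (x 0) + g (x 0)} := by
  have hmem : ∀ k, x k ∈ s := fun k => by
    induction k with
    | zero => exact hx0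
    | succ k ih =>
      rw [hxsucc k, hd k]
      exact hs_cv.add_smul_sub_mem ih (hv k).1
        ⟨(pow_pos hβ.1 _).le, pow_le_one₀ hβ.1.le hβ.2.le⟩
  have hdescent : ∀ k, f (x (k + 1)) + g (x (k + 1)) ≤ Fs k := fun k => by
    have hdecrease : 0 ≤ σ * β ^ ik k * FWgap f g s (x k) :=
      mul_nonneg (mul_nonneg hσ.1.le (pow_pos hβ.1 _).le) (FWgap_nonneg (hmem k))
    rw [hxsucc k]
    linarith [(hik k).1]
  have hFs_anti : Antitone Fs :=
    antitone_of_le_of_eq_convex_comb (a := fun k => f (x k) + g (x k)) hdescent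
      (fun k => hp.1.le.trans (hps k).1) hFsucc
  rintro (_ | k)
  · exact ⟨hx0, le_rfl⟩
  · exact ⟨hmem _, (hdescent k).trans ((hFs_anti (Nat.zero_le k)).trans hF0.le)⟩

/-- The whole sequence `{x^k}` generated by Algorithm 1 is contained in
the lower level set `{x ∈ s : F(x) ≤ F(x⁰)}`. -/
theorem alg1_iterates_in_level_set
    {E : Type*} [NormedAddCommGroup E] [InnerProductSpace ℝ E] [FiniteDimensional ℝ E]
    (s : Set E) (hs_ne : s.Nonempty) (hs_cl : IsClosed s) (hs_cv : Convex ℝ s)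
    (g : E → ℝ) (hg_cv : ConvexOn ℝ s g) (hg_lsc : LowerSemicontinuousOn g s)
    (hg_sc : ∀ M : ℝ, ∃ R : ℝ, ∀ z ∈ s, R ≤ ‖z‖ → M ≤ g z / ‖z‖)
    (f : E → ℝ) (hf : ∃ u : Set E, IsOpen u ∧ s ⊆ u ∧ ContDiffOn ℝ 1 f u)
    (hF_bdd : BddBelow ((fun z => f z + g z) '' s))
    (β σ p : ℝ) (hβ : β ∈ Set.Ioo (0 : ℝ) 1) (hσ : σ ∈ Set.Ioo (0 : ℝ) 1)
    (hp : p ∈ Set.Ioc (0 : ℝ) 1)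
    (x v d : ℕ → E) (ik : ℕ → ℕ) (Fs ps : ℕ → ℝ)
    (hx0 : x 0 ∈ s)
    (hv : ∀ k, v k ∈ s ∧ ∀ w ∈ s,
      ⟪gradient f (x k), v k⟫ + g (v k) ≤ ⟪gradient f (x k), w⟫ + g w)
    (hd : ∀ k, d k = v k - x k)
    (hik : ∀ k,
      (f (x k + β ^ ik k • d k) + g (x k + β ^ ik k • d k)
          ≤ Fs k - σ * β ^ ik k * FWgap f g s (x k))
      ∧ ∀ j < ik k,
        ¬ (f (x k + β ^ j • d k) + g (x k + β ^ j • d k)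
          ≤ Fs k - σ * β ^ j * FWgap f g s (x k)))
    (hxsucc : ∀ k, x (k + 1) = x k + β ^ ik k • d k)
    (hF0 : Fs 0 = f (x 0) + g (x 0))
    (hps : ∀ k, ps (k + 1) ∈ Set.Icc p 1)
    (hFsucc : ∀ k, Fs (k + 1)
      = ps (k + 1) * (f (x (k + 1)) + g (x (k + 1))) + (1 - ps (k + 1)) * Fs k)
    :
    ∀ k, x k ∈ {z ∈ s | f z + g z ≤ f (x 0) + g (x 0)} :=
  alg1_iterates_in_level_set_general s hs_cv g f β σ p hβ hσ hp x v d ik Fs ps hx0 hv hd hik hxsucc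
    hF0 hps hFsucc
end

section
/- Let {x^k} and {v^k} be generated by Algorithm 1, and suppose a subsequence {x^k}_{k ∈ K} converges to some point x* ∈ s. Then the corresponding subsequence {v^k}_{k ∈ K} is bounded. -/
open scoped RealInnerProductSpace

/-- If a subsequence `{x^k}_{k ∈ K}` of the iterates of Algorithm 1
converges to some point `x* ∈ s`, then the corresponding subsequence `{v^k}_{k ∈ K}` is
bounded. -/
theorem alg1_subproblem_solutions_bounded_along_subsequence
    {E : Type*} [NormedAddCommGroup E] [InnerProductSpace ℝ E] [FiniteDimensional ℝ E]
    (s : Set E) (hs_ne : s.Nonempty) (hs_cl : IsClosed s) (hs_cv : Convex ℝ s)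
    (g : E → ℝ) (hg_cv : ConvexOn ℝ s g) (hg_lsc : LowerSemicontinuousOn g s)
    (hg_sc : ∀ M : ℝ, ∃ R : ℝ, ∀ z ∈ s, R ≤ ‖z‖ → M ≤ g z / ‖z‖)
    (f : E → ℝ) (hf : ∃ u : Set E, IsOpen u ∧ s ⊆ u ∧ ContDiffOn ℝ 1 f u)
    (hF_bdd : BddBelow ((fun z => f z + g z) '' s))
    (β σ p : ℝ) (hβ : β ∈ Set.Ioo (0 : ℝ) 1) (hσ : σ ∈ Set.Ioo (0 : ℝ) 1)
    (hp : p ∈ Set.Ioc (0 : ℝ) 1)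
    (x v d : ℕ → E) (ik : ℕ → ℕ) (Fs ps : ℕ → ℝ)
    (hx0 : x 0 ∈ s)
    (hv : ∀ k, v k ∈ s ∧ ∀ w ∈ s,
      ⟪gradient f (x k), v k⟫ + g (v k) ≤ ⟪gradient f (x k), w⟫ + g w)
    (hd : ∀ k, d k = v k - x k)
    (hik : ∀ k,
      (f (x k + β ^ ik k • d k) + g (x k + β ^ ik k • d k)
          ≤ Fs k - σ * β ^ ik k * FWgap f g s (x k))
      ∧ ∀ j < ik k,
        ¬ (f (x k + β ^ j • d k) + g (x k + β ^ j • d k)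
          ≤ Fs k - σ * β ^ j * FWgap f g s (x k)))
    (hxsucc : ∀ k, x (k + 1) = x k + β ^ ik k • d k)
    (hF0 : Fs 0 = f (x 0) + g (x 0))
    (hps : ∀ k, ps (k + 1) ∈ Set.Icc p 1)
    (hFsucc : ∀ k, Fs (k + 1)
      = ps (k + 1) * (f (x (k + 1)) + g (x (k + 1))) + (1 - ps (k + 1)) * Fs k)
    (φ : ℕ → ℕ) (hφ : StrictMono φ)
    (xstar : E) (hxstar : xstar ∈ s)
    (hconv : Filter.Tendsto (fun k => x (φ k)) Filter.atTop (nhds xstar)) :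
    ∃ C : ℝ, ∀ k, ‖v (φ k)‖ ≤ C := by
  obtain ⟨u, hu_open, hsu, hfu⟩ := hf
  -- gradient is continuous on u
  have hgrad_cont : ContinuousOn (fun y => gradient f y) u := by
    have h1 : ContinuousOn (fderiv ℝ f) u :=
      hfu.continuousOn_fderiv_of_isOpen hu_open le_rfl
    exact (InnerProductSpace.toDual ℝ E).symm.continuous.comp_continuousOn h1
  have hmem : u ∈ nhds xstar := hu_open.mem_nhds (hsu hxstar)
  have hga : Filter.Tendsto (fun y => gradient f y) (nhds xstar) (nhds (gradient f xstar)) :=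
    hgrad_cont.continuousAt hmem
  have hgt : Filter.Tendsto (fun k => gradient f (x (φ k))) Filter.atTop
      (nhds (gradient f xstar)) := hga.comp hconv
  obtain ⟨A₀, hA₀⟩ := (hgt.norm).bddAbove_range
  simp only [upperBounds, Set.mem_range, forall_exists_index] at hA₀
  have hA₀' : ∀ k, ‖gradient f (x (φ k))‖ ≤ A₀ := fun k => hA₀ _ rfl
  set A : ℝ := max A₀ 0 with hA
  have hApos : 0 ≤ A := le_max_right _ _
  have hAbd : ∀ k, ‖gradient f (x (φ k))‖ ≤ A := fun k => (hA₀' k).trans (le_max_left _ _)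
  set M : ℝ := A * ‖xstar‖ + g xstar with hM
  -- upper bound on the subproblem value
  have hub : ∀ k, ⟪gradient f (x (φ k)), v (φ k)⟫ + g (v (φ k)) ≤ M := by
    intro k
    have h1 := (hv (φ k)).2 xstar hxstar
    have h2 : ⟪gradient f (x (φ k)), xstar⟫ ≤ ‖gradient f (x (φ k))‖ * ‖xstar‖ :=
      real_inner_le_norm _ _
    have h3 : ‖gradient f (x (φ k))‖ * ‖xstar‖ ≤ A * ‖xstar‖ :=
      mul_le_mul_of_nonneg_right (hAbd k) (norm_nonneg _)
    linarith
  obtain ⟨R, hR⟩ := hg_sc (A + max M 0 + 1)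
  refine ⟨max R 1, fun k => ?_⟩
  by_contra hcon
  push_neg at hcon
  have hvn1 : (1 : ℝ) ≤ ‖v (φ k)‖ := le_of_lt (lt_of_le_of_lt (le_max_right R 1) hcon)
  have hvnR : R ≤ ‖v (φ k)‖ := le_of_lt (lt_of_le_of_lt (le_max_left R 1) hcon)
  have hvpos : (0 : ℝ) < ‖v (φ k)‖ := lt_of_lt_of_le one_pos hvn1
  have hgv : (A + max M 0 + 1) ≤ g (v (φ k)) / ‖v (φ k)‖ := hR _ (hv (φ k)).1 hvnR
  have hgv' : (A + max M 0 + 1) * ‖v (φ k)‖ ≤ g (v (φ k)) := by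
    rw [← le_div_iff₀ hvpos]; exact hgv
  have hip : -(A * ‖v (φ k)‖) ≤ ⟪gradient f (x (φ k)), v (φ k)⟫ := by
    have h1 : |⟪gradient f (x (φ k)), v (φ k)⟫| ≤ ‖gradient f (x (φ k))‖ * ‖v (φ k)‖ :=
      abs_real_inner_le_norm _ _
    have h2 : ‖gradient f (x (φ k))‖ * ‖v (φ k)‖ ≤ A * ‖v (φ k)‖ :=
      mul_le_mul_of_nonneg_right (hAbd k) (norm_nonneg _)
    have := neg_abs_le ⟪gradient f (x (φ k)), v (φ k)⟫
    linarith
  have hkey : (max M 0 + 1) * ‖v (φ k)‖ ≤ M := by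
    have := hub k
    nlinarith
  have : max M 0 + 1 ≤ M := by
    calc max M 0 + 1 = (max M 0 + 1) * 1 := by ring
    _ ≤ (max M 0 + 1) * ‖v (φ k)‖ := by
        apply mul_le_mul_of_nonneg_left hvn1
        positivity
    _ ≤ M := hkey
  have := le_max_left M 0
  linarith
end

section
/- Let {x^k} be generated by Algorithm 1. Then every accumulation point x* of the sequence {x^k} is a stationary point of the problem of minimizing F over s; that is, G(x*) = 0. -/
open scoped RealInnerProductSpace

/-!
The reference values `Fs k` stay above `F(x^k)` and drop by at least `p σ β^{i_k} G(x^k)` per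
step; lower semicontinuity of `F` at `x*` bounds them below, so `β^{i_k} G(x^k) → 0`.
Supercoercivity of `g` keeps the directions `d^k` bounded along the subsequence. If
`G(x^{φ k})` stayed above some `δ > 0`, the accepted steps would vanish, so the rejected trial
steps `τ = β^{i_k - 1}` tend to `0`; convexity of `g` and the first-order expansion of `f`,
uniform near `x*`, turn each rejection into `(1 - σ) τ G(x^{φ k}) ≤ o(τ)`, a contradiction.
Finally each `x ↦ ⟪∇f(x), x - w⟫ + g(x) - g(w)` is lower semicontinuous on `s` at `x*` and is
bounded by `G(x^{φ k})` at `x^{φ k}`, so `G(x*) = 0`.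
-/

open Filter Topology Set

section Linearization

theorem isLittleO_apply_of_tendsto_zero {α 𝕜 E F : Type*} [NontriviallyNormedField 𝕜]
    [NormedAddCommGroup E] [NormedSpace 𝕜 E] [NormedAddCommGroup F] [NormedSpace 𝕜 F]
    {l : Filter α} {K : α → E →L[𝕜] F} {u : α → E} (hK : Tendsto K l (𝓝 0)) :
    (fun a => K a (u a)) =o[l] u := by
  refine Asymptotics.IsLittleO.of_bound fun c hc => ?_
  filter_upwards [hK.eventually (Metric.closedBall_mem_nhds 0 hc)] with a ha
  exact (K a).le_of_opNorm_le (mem_closedBall_zero_iff.1 ha) (u a)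

theorem isLittleO_sub_sub_fderiv_of_contDiffAt {𝕜 E F : Type*} [RCLike 𝕜]
    [NormedAddCommGroup E] [NormedSpace 𝕜 E] [NormedAddCommGroup F] [NormedSpace 𝕜 F]
    {f : E → F} {a : E} (hf : ContDiffAt 𝕜 1 f a) :
    (fun p : E × E => f p.1 - f p.2 - fderiv 𝕜 f p.2 (p.1 - p.2)) =o[𝓝 (a, a)]
      fun p => p.1 - p.2 := by
  have hK : Tendsto (fun p : E × E => fderiv 𝕜 f p.2 - fderiv 𝕜 f a) (𝓝 (a, a)) (𝓝 0) := by
    simpa using ((hf.continuousAt_fderiv one_ne_zero).tendsto.comp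
      (continuous_snd.tendsto (a, a))).sub_const (fderiv 𝕜 f a)
  refine ((hf.hasStrictFDerivAt one_ne_zero).isLittleO.sub
    (isLittleO_apply_of_tendsto_zero hK)).congr_left fun p => ?_
  simp only [sub_apply]
  abel

theorem isLittleO_sub_sub_inner_gradient_of_contDiffAt {E : Type*} [NormedAddCommGroup E]
    [InnerProductSpace ℝ E] [CompleteSpace E] {f : E → ℝ} {a : E} (hf : ContDiffAt ℝ 1 f a) :
    (fun p : E × E => f p.1 - f p.2 - ⟪gradient f p.2, p.1 - p.2⟫) =o[𝓝 (a, a)]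
      fun p => p.1 - p.2 := by
  simpa only [gradient, InnerProductSpace.toDual_symm_apply]
    using isLittleO_sub_sub_fderiv_of_contDiffAt hf

theorem ContDiffAt.continuousAt_gradient {E : Type*} [NormedAddCommGroup E]
    [InnerProductSpace ℝ E] [CompleteSpace E] {f : E → ℝ} {a : E} (hf : ContDiffAt ℝ 1 f a) :
    ContinuousAt (gradient f) a :=
  (InnerProductSpace.toDual ℝ E).symm.continuous.continuousAt.comp
    (hf.continuousAt_fderiv one_ne_zero)

end Linearization

section Sequences

theorem Antitone.le_of_frequently_le {α β : Type*} [SemilatticeSup α] [Nonempty α] [Preorder β]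
    {u : α → β} {m : β} (hu : Antitone u) (h : ∃ᶠ n in atTop, m ≤ u n) (n : α) : m ≤ u n := by
  obtain ⟨N, hN, hm⟩ := frequently_atTop.1 h n
  exact hm.trans (hu hN)

theorem tendsto_zero_of_mul_le_sub_succ {u δ : ℕ → ℝ} {c m : ℝ} (hc : 0 < c)
    (hδ : ∀ k, 0 ≤ δ k) (hu : ∀ k, u (k + 1) ≤ u k - c * δ k) (hm : ∀ k, m ≤ u k) :
    Tendsto δ atTop (𝓝 0) := by
  have hanti : Antitone u :=
    antitone_nat_of_succ_le fun k => by linarith [hu k, mul_nonneg hc.le (hδ k)]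
  have hlim := tendsto_atTop_ciInf hanti ⟨m, forall_mem_range.2 hm⟩
  have hdiff : Tendsto (fun k => (u k - u (k + 1)) / c) atTop (𝓝 0) := by
    simpa using (hlim.sub (hlim.comp (tendsto_add_atTop_nat 1))).div_const c
  exact squeeze_zero hδ (fun k => (le_div_iff₀ hc).2 (by linarith [hu k])) hdiff

theorem nonmonotone_descent {a Fs ps δ : ℕ → ℝ} {p c m : ℝ} (hp : 0 < p) (hc : 0 < c)
    (hps : ∀ k, ps (k + 1) ∈ Icc p 1) (hδ : ∀ k, 0 ≤ δ k) (h0 : a 0 ≤ Fs 0)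
    (ha : ∀ k, a (k + 1) ≤ Fs k - c * δ k)
    (hFs : ∀ k, Fs (k + 1) = ps (k + 1) * a (k + 1) + (1 - ps (k + 1)) * Fs k)
    (hm : ∃ᶠ k in atTop, m ≤ a k) :
    (∀ k, a k ≤ Fs k) ∧ Antitone Fs ∧ Tendsto δ atTop (𝓝 0) := by
  have hstep k : Fs (k + 1) ≤ Fs k - p * c * δ k ∧ a (k + 1) ≤ Fs (k + 1) := by
    obtain ⟨hp₁, hp₂⟩ := hps k
    have hcδ := mul_nonneg hc.le (hδ k)
    rw [hFs k]
    constructor <;> nlinarith [ha k, mul_nonneg (sub_nonneg.2 hp₁) hcδ]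
  have hle : ∀ k, a k ≤ Fs k
    | 0 => h0
    | k + 1 => (hstep k).2
  have hanti : Antitone Fs := antitone_nat_of_succ_le fun k =>
    (hstep k).1.trans (sub_le_self _ (mul_nonneg (mul_pos hp hc).le (hδ k)))
  exact ⟨hle, hanti, tendsto_zero_of_mul_le_sub_succ (mul_pos hp hc) hδ (fun k => (hstep k).1)
    (hanti.le_of_frequently_le (hm.mono fun k hk => hk.trans (hle k)))⟩

end Sequences

section Supercoercive

variable {E : Type*} [NormedAddCommGroup E] [InnerProductSpace ℝ E] {g : E → ℝ} {s : Set E}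

theorem norm_le_of_supercoercive (hg : ∀ M : ℝ, ∃ R : ℝ, ∀ z ∈ s, R ≤ ‖z‖ → M ≤ g z / ‖z‖)
    (A C : ℝ) : ∃ R, ∀ b v, v ∈ s → ‖b‖ ≤ A → ⟪b, v⟫ + g v ≤ C → ‖v‖ ≤ R := by
  obtain ⟨R, hR⟩ := hg (A + 1)
  refine ⟨max (max R 1) C, fun b v hv hb hC => ?_⟩
  by_contra! hlt
  simp only [max_lt_iff] at hlt
  obtain ⟨⟨hRv, h1v⟩, hCv⟩ := hlt
  have hgv : (A + 1) * ‖v‖ ≤ g v := (le_div_iff₀ (by linarith)).1 (hR v hv hRv.le)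
  have hbv : -(A * ‖v‖) ≤ ⟪b, v⟫ := neg_le_of_abs_le <|
    (abs_real_inner_le_norm b v).trans (mul_le_mul_of_nonneg_right hb (norm_nonneg v))
  nlinarith

end Supercoercive

section FrankWolfe

variable {E : Type*} [NormedAddCommGroup E] [InnerProductSpace ℝ E] [CompleteSpace E]
  {f g : E → ℝ} {s : Set E} {x v w : E}

noncomputable def fwGapTerm (f g : E → ℝ) (x v : E) : ℝ :=
  ⟪gradient f x, x - v⟫ + g x - g v

theorem fwGapTerm_self : fwGapTerm f g x x = 0 := by
  simp [fwGapTerm]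

theorem fwGapTerm_le_of_le (h : ⟪gradient f x, v⟫ + g v ≤ ⟪gradient f x, w⟫ + g w) :
    fwGapTerm f g x w ≤ fwGapTerm f g x v := by
  simp only [fwGapTerm, inner_sub_right]
  linarith

theorem fwGapTerm_nonneg (hx : x ∈ s) (hmin : IsMinOn (fun w => ⟪gradient f x, w⟫ + g w) s v) :
    0 ≤ fwGapTerm f g x v :=
  fwGapTerm_self (f := f) (g := g) ▸ fwGapTerm_le_of_le (isMinOn_iff.1 hmin x hx)

theorem FWgap_eq_fwGapTerm (hv : v ∈ s)
    (hmin : IsMinOn (fun w => ⟪gradient f x, w⟫ + g w) s v) :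
    FWgap f g s x = fwGapTerm f g x v := by
  have hle (w : s) : fwGapTerm f g x w ≤ fwGapTerm f g x v :=
    fwGapTerm_le_of_le (isMinOn_iff.1 hmin w w.2)
  have : Nonempty s := ⟨⟨v, hv⟩⟩
  exact le_antisymm (ciSup_le hle) (le_ciSup (f := fun w : s => fwGapTerm f g x w)
    ⟨_, forall_mem_range.2 hle⟩ ⟨v, hv⟩)

theorem FWgap_eq_zero_of_forall_fwGapTerm_nonpos (hx : x ∈ s)
    (h : ∀ w ∈ s, fwGapTerm f g x w ≤ 0) : FWgap f g s x = 0 := by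
  have : Nonempty s := ⟨⟨x, hx⟩⟩
  refine le_antisymm (ciSup_le fun w => h w w.2) ?_
  calc 0 = fwGapTerm f g x x := fwGapTerm_self.symm
    _ ≤ FWgap f g s x := le_ciSup (f := fun w : s => fwGapTerm f g x w)
      ⟨0, forall_mem_range.2 fun w => h w w.2⟩ ⟨x, hx⟩

theorem mul_fwGapTerm_lt_of_armijo_fails (hg : ConvexOn ℝ s g) (hx : x ∈ s) (hv : v ∈ s)
    {σ τ : ℝ} (hτ : τ ∈ Icc (0 : ℝ) 1)
    (hfail : f x + g x - σ * τ * fwGapTerm f g x v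
      < f (x + τ • (v - x)) + g (x + τ • (v - x))) :
    (1 - σ) * τ * fwGapTerm f g x v
      < f (x + τ • (v - x)) - f x - ⟪gradient f x, τ • (v - x)⟫ := by
  have hconv : g (x + τ • (v - x)) ≤ (1 - τ) * g x + τ * g v := by
    have hseg : x + τ • (v - x) = (1 - τ) • x + τ • v := by module
    rw [hseg]
    exact hg.2 hx hv (sub_nonneg.2 hτ.2) hτ.1 (sub_add_cancel 1 τ)
  simp only [fwGapTerm, inner_smul_right, inner_sub_right] at hfail ⊢
  linarith

variable {ι : Type*} {l : Filter ι} {a : E} {y u : ι → E}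

theorem exists_eventually_norm_sub_le_of_supercoercive
    (hg : ∀ M : ℝ, ∃ R : ℝ, ∀ z ∈ s, R ≤ ‖z‖ → M ≤ g z / ‖z‖)
    (hgrad : ContinuousAt (gradient f) a) (hf : ContinuousAt f a) (hy : Tendsto y l (𝓝 a))
    (hys : ∀ k, y k ∈ s) (hus : ∀ k, u k ∈ s)
    (hmin : ∀ k, IsMinOn (fun w => ⟪gradient f (y k), w⟫ + g w) s (u k)) {C : ℝ}
    (hC : ∀ k, f (y k) + g (y k) ≤ C) : ∃ D, ∀ᶠ k in l, ‖u k - y k‖ ≤ D := by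
  obtain ⟨R, hR⟩ := norm_le_of_supercoercive hg (‖gradient f a‖ + 1)
    (⟪gradient f a, a⟫ + 1 + (C - (f a - 1)))
  have hb := hgrad.tendsto.comp hy
  refine ⟨R + (‖a‖ + 1), ?_⟩
  filter_upwards [hb.norm.eventually (gt_mem_nhds (lt_add_one _)),
    (hb.inner (𝕜 := ℝ) hy).eventually (gt_mem_nhds (lt_add_one _)),
    hy.norm.eventually (gt_mem_nhds (lt_add_one _)),
    (hf.tendsto.comp hy).eventually (lt_mem_nhds (sub_one_lt _))] with k hbk hbyk hyk hfk
  simp only [Function.comp_apply] at hbk hbyk hfk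
  have hmink := isMinOn_iff.1 (hmin k) (y k) (hys k)
  calc ‖u k - y k‖ ≤ ‖u k‖ + ‖y k‖ := norm_sub_le _ _
    _ ≤ R + (‖a‖ + 1) :=
      add_le_add (hR _ _ (hus k) hbk.le (by linarith [hC k])) hyk.le

theorem eventually_fwGapTerm_lt_of_armijo_fails (hf : ContDiffAt ℝ 1 f a)
    (hg : ConvexOn ℝ s g) {σ D ε : ℝ} (hσ : σ < 1) {τ : ι → ℝ}
    (hy : Tendsto y l (𝓝 a)) (hys : ∀ k, y k ∈ s) (hus : ∀ k, u k ∈ s)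
    (hD : ∀ᶠ k in l, ‖u k - y k‖ ≤ D) (hτ : Tendsto τ l (𝓝 0)) (hτ₁ : ∀ k, τ k ∈ Ioc 0 1)
    (hfail : ∀ᶠ k in l, f (y k) + g (y k) - σ * τ k * fwGapTerm f g (y k) (u k)
      < f (y k + τ k • (u k - y k)) + g (y k + τ k • (u k - y k)))
    (hε : 0 < ε) : ∀ᶠ k in l, fwGapTerm f g (y k) (u k) < ε := by
  obtain ⟨c, hc, hcD⟩ := exists_pos_mul_lt (mul_pos (sub_pos.2 hσ) hε) D
  have hz : Tendsto (fun k => y k + τ k • (u k - y k)) l (𝓝 a) := by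
    simpa using hy.add (hτ.zero_smul_isBoundedUnder_le (isBoundedUnder_of_eventually_le hD))
  have hrem := ((isLittleO_sub_sub_inner_gradient_of_contDiffAt hf).comp_tendsto
    (hz.prodMk_nhds hy)).bound hc
  filter_upwards [hrem, hfail, hD] with k hremk hfailk hDk
  obtain ⟨hτ₀, hτ₁⟩ := hτ₁ k
  simp only [Function.comp_apply, add_sub_cancel_left, norm_smul, Real.norm_eq_abs,
    abs_of_pos hτ₀] at hremk
  have hlt : (1 - σ) * τ k * fwGapTerm f g (y k) (u k) < (1 - σ) * τ k * ε := calc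
    _ < _ := mul_fwGapTerm_lt_of_armijo_fails hg (hys k) (hus k) ⟨hτ₀.le, hτ₁⟩ hfailk
    _ ≤ c * (τ k * ‖u k - y k‖) := (le_abs_self _).trans hremk
    _ ≤ c * (τ k * D) := by gcongr
    _ = D * c * τ k := by ring
    _ < (1 - σ) * ε * τ k := mul_lt_mul_of_pos_right hcD hτ₀
    _ = (1 - σ) * τ k * ε := by ring
  exact lt_of_mul_lt_mul_left hlt (mul_pos (sub_pos.2 hσ) hτ₀).le

theorem frequently_fwGapTerm_lt_of_backtracking [l.NeBot] (hf : ContDiffAt ℝ 1 f a)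
    (hg : ConvexOn ℝ s g) {σ β D δ : ℝ} (hσ : σ < 1) (hβ : β ∈ Ioo (0 : ℝ) 1) {i : ι → ℕ}
    (hy : Tendsto y l (𝓝 a)) (hys : ∀ k, y k ∈ s) (hus : ∀ k, u k ∈ s)
    (hD : ∀ᶠ k in l, ‖u k - y k‖ ≤ D)
    (hstep : Tendsto (fun k => β ^ i k * fwGapTerm f g (y k) (u k)) l (𝓝 0))
    {R : ι → ℝ} (hR : ∀ k, f (y k) + g (y k) ≤ R k)
    (hfail : ∀ k, ∀ j < i k, R k - σ * β ^ j * fwGapTerm f g (y k) (u k)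
      < f (y k + β ^ j • (u k - y k)) + g (y k + β ^ j • (u k - y k)))
    (hδ : 0 < δ) : ∃ᶠ k in l, fwGapTerm f g (y k) (u k) < δ := by
  obtain ⟨hβ₀, hβ₁⟩ := hβ
  by_contra hlarge
  have hge : ∀ᶠ k in l, δ ≤ fwGapTerm f g (y k) (u k) := by
    simpa only [not_lt] using not_frequently.1 hlarge
  have ht : Tendsto (fun k => β ^ i k) l (𝓝 0) :=
    squeeze_zero' (.of_forall fun k => by positivity)
      (hge.mono fun k hk => (le_div_iff₀ hδ).2 (mul_le_mul_of_nonneg_left hk (by positivity)))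
      (by simpa using hstep.div_const δ)
  have hi : ∀ᶠ k in l, i k ≠ 0 :=
    (ht.eventually (gt_mem_nhds one_pos)).mono fun k hk h0 => by simp [h0] at hk
  have hτ : Tendsto (fun k => β ^ (i k - 1)) l (𝓝 0) := by
    have hdiv := ht.div_const β
    rw [zero_div] at hdiv
    refine hdiv.congr' (hi.mono fun k hk => ?_)
    rw [div_eq_iff hβ₀.ne', ← pow_succ, Nat.sub_add_cancel (Nat.one_le_iff_ne_zero.2 hk)]
  have hsmall := eventually_fwGapTerm_lt_of_armijo_fails hf hg hσ hy hys hus hD hτ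
    (fun k => ⟨pow_pos hβ₀ _, pow_le_one₀ hβ₀.le hβ₁.le⟩)
    (hi.mono fun k hk => (sub_le_sub_right (hR k) _).trans_lt
      (hfail k _ (Nat.sub_lt (Nat.pos_of_ne_zero hk) one_pos))) hδ
  obtain ⟨k, hk₁, hk₂⟩ := (hge.and hsmall).exists
  exact hk₁.not_gt hk₂

theorem FWgap_eq_zero_of_frequently_fwGapTerm_lt [l.NeBot] (ha : a ∈ s)
    (hgrad : ContinuousAt (gradient f) a) (hg : LowerSemicontinuousWithinAt g s a)
    (hy : Tendsto y l (𝓝[s] a))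
    (hmin : ∀ k, IsMinOn (fun w => ⟪gradient f (y k), w⟫ + g w) s (u k))
    (hsmall : ∀ δ > 0, ∃ᶠ k in l, fwGapTerm f g (y k) (u k) < δ) : FWgap f g s a = 0 := by
  refine FWgap_eq_zero_of_forall_fwGapTerm_nonpos ha fun w hw => ?_
  by_contra! hpos
  have hlsc : LowerSemicontinuousWithinAt (fun z => fwGapTerm f g z w) s a := by
    have hcont : ContinuousAt (fun z => ⟪gradient f z, z - w⟫ - g w) a := by fun_prop
    simpa only [fwGapTerm, add_sub_right_comm] using
      hcont.lowerSemicontinuousAt.lowerSemicontinuousWithinAt s |>.add hg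
  have hlarge : ∀ᶠ k in l, fwGapTerm f g a w / 2 < fwGapTerm f g (y k) (u k) :=
    (hy.eventually (hlsc _ (half_lt_self hpos))).mono fun k hk =>
      hk.trans_le (fwGapTerm_le_of_le (isMinOn_iff.1 (hmin k) w hw))
  obtain ⟨k, hk₁, hk₂⟩ := ((hsmall _ (half_pos hpos)).and_eventually hlarge).exists
  exact hk₁.not_gt hk₂

end FrankWolfe

theorem alg1_accumulation_points_stationary_general
    {E : Type*} [NormedAddCommGroup E] [InnerProductSpace ℝ E] [FiniteDimensional ℝ E]
    (s : Set E) (hs_cl : IsClosed s) (hs_cv : Convex ℝ s)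
    (g : E → ℝ) (hg_cv : ConvexOn ℝ s g) (hg_lsc : LowerSemicontinuousOn g s)
    (hg_sc : ∀ M : ℝ, ∃ R : ℝ, ∀ z ∈ s, R ≤ ‖z‖ → M ≤ g z / ‖z‖)
    (f : E → ℝ) (hf : ∃ u : Set E, IsOpen u ∧ s ⊆ u ∧ ContDiffOn ℝ 1 f u)
    (β σ p : ℝ) (hβ : β ∈ Set.Ioo (0 : ℝ) 1) (hσ : σ ∈ Set.Ioo (0 : ℝ) 1)
    (hp : p ∈ Set.Ioc (0 : ℝ) 1)
    (x v d : ℕ → E) (ik : ℕ → ℕ) (Fs ps : ℕ → ℝ)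
    (hx0 : x 0 ∈ s)
    (hv : ∀ k, v k ∈ s ∧ ∀ w ∈ s,
      ⟪gradient f (x k), v k⟫ + g (v k) ≤ ⟪gradient f (x k), w⟫ + g w)
    (hd : ∀ k, d k = v k - x k)
    (hik : ∀ k,
      (f (x k + β ^ ik k • d k) + g (x k + β ^ ik k • d k)
          ≤ Fs k - σ * β ^ ik k * FWgap f g s (x k))
      ∧ ∀ j < ik k,
        ¬ (f (x k + β ^ j • d k) + g (x k + β ^ j • d k)
          ≤ Fs k - σ * β ^ j * FWgap f g s (x k)))
    (hxsucc : ∀ k, x (k + 1) = x k + β ^ ik k • d k)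
    (hF0 : Fs 0 = f (x 0) + g (x 0))
    (hps : ∀ k, ps (k + 1) ∈ Set.Icc p 1)
    (hFsucc : ∀ k, Fs (k + 1)
      = ps (k + 1) * (f (x (k + 1)) + g (x (k + 1))) + (1 - ps (k + 1)) * Fs k)
    (xstar : E)
    (φ : ℕ → ℕ) (hφ : StrictMono φ)
    (hconv : Filter.Tendsto (fun k => x (φ k)) Filter.atTop (nhds xstar)) :
    FWgap f g s xstar = 0 := by
  obtain ⟨U, hU, hsU, hfU⟩ := hf
  have hmin k : IsMinOn (fun w => ⟪gradient f (x k), w⟫ + g w) s (v k) := isMinOn_iff.2 (hv k).2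
  have hxs : ∀ k, x k ∈ s := Nat.rec hx0 fun k hk => hxsucc k ▸ hd k ▸
    hs_cv.add_smul_sub_mem hk (hv k).1 ⟨pow_nonneg hβ.1.le _, pow_le_one₀ hβ.1.le hβ.2.le⟩
  have hgap k : FWgap f g s (x k) = fwGapTerm f g (x k) (v k) :=
    FWgap_eq_fwGapTerm (hv k).1 (hmin k)
  have hxstar : xstar ∈ s := hs_cl.mem_of_tendsto hconv (.of_forall fun k => hxs _)
  have hC1 : ContDiffAt ℝ 1 f xstar := hfU.contDiffAt (hU.mem_nhds (hsU hxstar))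
  have hxφ : Tendsto (fun k => x (φ k)) atTop (𝓝[s] xstar) :=
    tendsto_nhdsWithin_iff.2 ⟨hconv, .of_forall fun k => hxs _⟩
  have hF_lsc : LowerSemicontinuousWithinAt (fun z => f z + g z) s xstar :=
    (hC1.continuousAt.lowerSemicontinuousAt.lowerSemicontinuousWithinAt s).add (hg_lsc _ hxstar)
  obtain ⟨hFle, hFs_anti, hstep⟩ :=
    nonmonotone_descent (a := fun k => f (x k) + g (x k)) hp.1 hσ.1 hps
    (fun k => mul_nonneg (pow_nonneg hβ.1.le _) (fwGapTerm_nonneg (hxs k) (hmin k))) hF0.ge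
    (fun k => by simpa only [hxsucc, hgap, mul_assoc] using (hik k).1) hFsucc
    (hφ.tendsto_atTop.frequently
      ((hxφ.eventually (hF_lsc _ (sub_one_lt _))).mono fun _ => le_of_lt).frequently)
  obtain ⟨D, hD⟩ := exists_eventually_norm_sub_le_of_supercoercive hg_sc
    hC1.continuousAt_gradient hC1.continuousAt hconv (fun k => hxs _) (fun k => (hv _).1)
    (fun k => hmin _) fun k => (hFle _).trans (hFs_anti (Nat.zero_le _))
  refine FWgap_eq_zero_of_frequently_fwGapTerm_lt hxstar hC1.continuousAt_gradient
    (hg_lsc _ hxstar) hxφ (fun k => hmin _) fun δ hδ =>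
      frequently_fwGapTerm_lt_of_backtracking hC1 hg_cv hσ.2 hβ hconv (fun k => hxs _)
        (fun k => (hv _).1) hD (hstep.comp hφ.tendsto_atTop) (fun k => hFle _)
        (fun k j hj => by simpa only [hgap, hd, not_le] using (hik (φ k)).2 j hj) hδ

/-- **Theorem: subsequential convergence of Algorithm 1.**
Every accumulation point `x*` of the sequence `{x^k}` generated by Algorithm 1 is a
stationary point of the problem of minimizing `F` over `s`, i.e. `G(x*) = 0`. -/
theorem alg1_accumulation_points_stationary
    {E : Type*} [NormedAddCommGroup E] [InnerProductSpace ℝ E] [FiniteDimensional ℝ E]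
    (s : Set E) (hs_ne : s.Nonempty) (hs_cl : IsClosed s) (hs_cv : Convex ℝ s)
    (g : E → ℝ) (hg_cv : ConvexOn ℝ s g) (hg_lsc : LowerSemicontinuousOn g s)
    (hg_sc : ∀ M : ℝ, ∃ R : ℝ, ∀ z ∈ s, R ≤ ‖z‖ → M ≤ g z / ‖z‖)
    (f : E → ℝ) (hf : ∃ u : Set E, IsOpen u ∧ s ⊆ u ∧ ContDiffOn ℝ 1 f u)
    (hF_bdd : BddBelow ((fun z => f z + g z) '' s))
    (β σ p : ℝ) (hβ : β ∈ Set.Ioo (0 : ℝ) 1) (hσ : σ ∈ Set.Ioo (0 : ℝ) 1)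
    (hp : p ∈ Set.Ioc (0 : ℝ) 1)
    (x v d : ℕ → E) (ik : ℕ → ℕ) (Fs ps : ℕ → ℝ)
    (hx0 : x 0 ∈ s)
    (hv : ∀ k, v k ∈ s ∧ ∀ w ∈ s,
      ⟪gradient f (x k), v k⟫ + g (v k) ≤ ⟪gradient f (x k), w⟫ + g w)
    (hd : ∀ k, d k = v k - x k)
    (hik : ∀ k,
      (f (x k + β ^ ik k • d k) + g (x k + β ^ ik k • d k)
          ≤ Fs k - σ * β ^ ik k * FWgap f g s (x k))
      ∧ ∀ j < ik k,
        ¬ (f (x k + β ^ j • d k) + g (x k + β ^ j • d k)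
          ≤ Fs k - σ * β ^ j * FWgap f g s (x k)))
    (hxsucc : ∀ k, x (k + 1) = x k + β ^ ik k • d k)
    (hF0 : Fs 0 = f (x 0) + g (x 0))
    (hps : ∀ k, ps (k + 1) ∈ Set.Icc p 1)
    (hFsucc : ∀ k, Fs (k + 1)
      = ps (k + 1) * (f (x (k + 1)) + g (x (k + 1))) + (1 - ps (k + 1)) * Fs k)
    (xstar : E)
    (φ : ℕ → ℕ) (hφ : StrictMono φ)
    (hconv : Filter.Tendsto (fun k => x (φ k)) Filter.atTop (nhds xstar)) :
    FWgap f g s xstar = 0 :=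
  alg1_accumulation_points_stationary_general s hs_cl hs_cv g hg_cv hg_lsc hg_sc f hf β σ p hβ hσ hp
    x v d ik Fs ps hx0 hv hd hik hxsucc hF0 hps hFsucc xstar φ hφ hconv
end

section
/- Let {x^k} be generated by Algorithm 1, and suppose a subsequence {x^k}_{k ∈ K} converges to some point x*. Then liminf_{k→∞, k ∈ K} G(x^k) = 0. -/
open scoped RealInnerProductSpace

/-!
Suppose the gap stayed above `ε` along the subsequence. The reference values `F_k` decrease by
at least `p σ β^{i_k} G(x^k)` per step and are bounded below, so the accepted steps `β^{i_k}`
tend to `0`; in particular the larger step `t = β^{i_k - 1}` was rejected by the Armijo test.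
Convexity of `g` turns that rejection into
`(1 - σ) t G(x^k) < f(x^k + t d^k) - f(x^k) - t ⟪∇f(x^k), d^k⟫`.
Along the subsequence `x^k → x*`, `f` is `C¹` near `x*`, and supercoercivity of `g` keeps the
directions `d^k` bounded, so the right-hand side is `o(t)`: a contradiction.
-/

open Filter Topology Asymptotics Set

section Gap

variable {E : Type*} [NormedAddCommGroup E] [InnerProductSpace ℝ E] [CompleteSpace E]
  {f g : E → ℝ} {s : Set E} {x v : E}

theorem FWgap_eq_of_forall_le (hv : v ∈ s)
    (hmin : ∀ w ∈ s, ⟪gradient f x, v⟫ + g v ≤ ⟪gradient f x, w⟫ + g w) :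
    FWgap f g s x = ⟪gradient f x, x - v⟫ + g x - g v := by
  have : Nonempty s := ⟨⟨v, hv⟩⟩
  have hle : ∀ w : s, ⟪gradient f x, x - w⟫ + g x - g w ≤ ⟪gradient f x, x - v⟫ + g x - g v := by
    intro w
    have := hmin w w.2
    simp only [inner_sub_right]
    linarith
  exact le_antisymm (ciSup_le hle) (le_ciSup ⟨_, forall_mem_range.2 hle⟩ ⟨v, hv⟩)

theorem FWgap_nonneg_of_forall_le (hx : x ∈ s) (hv : v ∈ s)
    (hmin : ∀ w ∈ s, ⟪gradient f x, v⟫ + g v ≤ ⟪gradient f x, w⟫ + g w) :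
    0 ≤ FWgap f g s x := by
  have := hmin x hx
  rw [FWgap_eq_of_forall_le hv hmin, inner_sub_right]
  linarith

end Gap

section NonmonotoneReference

variable {Φ R q a : ℕ → ℝ} {p : ℝ}

theorem le_of_nonmonotone_reference (hR0 : R 0 = Φ 0) (hq : ∀ k, q (k + 1) ≤ 1)
    (hdesc : ∀ k, Φ (k + 1) ≤ R k - a k) (ha : ∀ k, 0 ≤ a k)
    (hR : ∀ k, R (k + 1) = q (k + 1) * Φ (k + 1) + (1 - q (k + 1)) * R k) (k : ℕ) :
    Φ k ≤ R k := by
  cases k with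
  | zero => exact hR0.ge
  | succ k =>
    have hgap : 0 ≤ R k - Φ (k + 1) := by linarith [hdesc k, ha k]
    rw [hR k]
    nlinarith [mul_nonneg (sub_nonneg.2 (hq k)) hgap]

theorem reference_succ_le (hp : 0 ≤ p) (hq : ∀ k, q (k + 1) ∈ Icc p 1)
    (hdesc : ∀ k, Φ (k + 1) ≤ R k - a k) (ha : ∀ k, 0 ≤ a k)
    (hR : ∀ k, R (k + 1) = q (k + 1) * Φ (k + 1) + (1 - q (k + 1)) * R k) (k : ℕ) :
    R (k + 1) ≤ R k - p * a k := by
  obtain ⟨hpq, -⟩ := hq k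
  rw [hR k]
  nlinarith [mul_le_mul_of_nonneg_right hpq (ha k),
    mul_le_mul_of_nonneg_left (hdesc k) (hp.trans hpq)]

theorem tendsto_zero_of_nonmonotone_reference (hΦ : BddBelow (range Φ)) (hp : 0 < p)
    (hR0 : R 0 = Φ 0) (hq : ∀ k, q (k + 1) ∈ Icc p 1)
    (hdesc : ∀ k, Φ (k + 1) ≤ R k - a k) (ha : ∀ k, 0 ≤ a k)
    (hR : ∀ k, R (k + 1) = q (k + 1) * Φ (k + 1) + (1 - q (k + 1)) * R k) :
    Tendsto a atTop (𝓝 0) := by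
  have hsucc := reference_succ_le hp.le hq hdesc ha hR
  have hanti : Antitone R := antitone_nat_of_succ_le fun k => by
    nlinarith [hsucc k, mul_nonneg hp.le (ha k)]
  obtain ⟨m, hm⟩ := hΦ
  have hΦR := le_of_nonmonotone_reference hR0 (fun k => (hq k).2) hdesc ha hR
  have hbdd : BddBelow (range R) :=
    ⟨m, forall_mem_range.2 fun k => (hm (mem_range_self k)).trans (hΦR k)⟩
  have hlim := tendsto_atTop_ciInf hanti hbdd
  have hdiff : Tendsto (fun k => (R k - R (k + 1)) / p) atTop (𝓝 0) := by
    simpa using (hlim.sub (hlim.comp (tendsto_add_atTop_nat 1))).div_const p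
  refine squeeze_zero ha (fun k => ?_) hdiff
  rw [le_div_iff₀ hp]
  linarith [hsucc k]

end NonmonotoneReference

theorem isBoundedUnder_norm_of_supercoercive {E ι : Type*} [NormedAddCommGroup E]
    [InnerProductSpace ℝ E] {s : Set E} {g : E → ℝ}
    (hg : ∀ M : ℝ, ∃ R : ℝ, ∀ z ∈ s, R ≤ ‖z‖ → M ≤ g z / ‖z‖) {l : Filter ι} {c v : ι → E}
    {w : E} (hc : IsBoundedUnder (· ≤ ·) l fun k => ‖c k‖) (hv : ∀ k, v k ∈ s)
    (hmin : ∀ k, ⟪c k, v k⟫ + g (v k) ≤ ⟪c k, w⟫ + g w) :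
    IsBoundedUnder (· ≤ ·) l fun k => ‖v k‖ := by
  obtain ⟨N, hN⟩ := hc
  obtain ⟨R, hR⟩ := hg (N + 1)
  refine ⟨max R (max 0 (N * ‖w‖ + g w)), eventually_map.2 <| (eventually_map.1 hN).mono
    fun k hk => le_of_not_gt fun hlarge => ?_⟩
  obtain ⟨hRv, hpos, hCv⟩ := max_lt_iff.1 hlarge |>.imp_right max_lt_iff.1
  have hgrowth : (N + 1) * ‖v k‖ ≤ g (v k) := (le_div_iff₀ hpos).1 (hR _ (hv k) hRv.le)
  have hcv := neg_le_of_abs_le (abs_real_inner_le_norm (c k) (v k))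
  have hcw := real_inner_le_norm (c k) w
  nlinarith [hmin k, mul_le_mul_of_nonneg_right hk (norm_nonneg (v k)),
    mul_le_mul_of_nonneg_right hk (norm_nonneg w)]

theorem lt_remainder_of_armijo_fails {E : Type*} [NormedAddCommGroup E] [InnerProductSpace ℝ E]
    {f g : E → ℝ} {s : Set E} (hg : ConvexOn ℝ s g) {x v c : E} (hx : x ∈ s) (hv : v ∈ s)
    {t R σ : ℝ} (ht : t ∈ Icc 0 1) (hxR : f x + g x ≤ R)
    (hfail : R - σ * t * (⟪c, x - v⟫ + g x - g v) < f (x + t • (v - x)) + g (x + t • (v - x))) :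
    (1 - σ) * t * (⟪c, x - v⟫ + g x - g v) < f (x + t • (v - x)) - f x - t * ⟪c, v - x⟫ := by
  have hseg : x + t • (v - x) = (1 - t) • x + t • v := by module
  have hconv : g (x + t • (v - x)) ≤ (1 - t) * g x + t * g v := by
    rw [hseg]
    exact hg.2 hx hv (sub_nonneg.2 ht.2) ht.1 (by ring)
  simp only [inner_sub_right] at hfail ⊢
  nlinarith

theorem ContDiffAt.isLittleO_sub_sub_fderiv_smul {E F ι : Type*} [NormedAddCommGroup E]
    [NormedSpace ℝ E] [NormedAddCommGroup F] [NormedSpace ℝ F] {f : E → F} {x : E}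
    (hf : ContDiffAt ℝ 1 f x) {l : Filter ι} {y d : ι → E} {t : ι → ℝ}
    (hy : Tendsto y l (𝓝 x)) (ht : Tendsto t l (𝓝 0))
    (hd : IsBoundedUnder (· ≤ ·) l fun k => ‖d k‖) :
    (fun k => f (y k + t k • d k) - f (y k) - t k • fderiv ℝ f (y k) (d k)) =o[l] t := by
  obtain ⟨D, hD⟩ := hd
  have hstep : (fun k => t k • d k) =O[l] t :=
    .of_bound D <| (eventually_map.1 hD).mono fun k hk => by
      rw [norm_smul, mul_comm]; exact mul_le_mul_of_nonneg_right hk (norm_nonneg _)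
  have hz : Tendsto (fun k => (y k + t k • d k, y k)) l (𝓝 (x, x)) := by
    refine .prodMk_nhds ?_ hy
    simpa using hy.add (ht.zero_smul_isBoundedUnder_le ⟨D, hD⟩)
  -- Strict differentiability controls the remainder taken with `fderiv ℝ f x`; continuity of
  -- `fderiv ℝ f` at `x` accounts for replacing it by `fderiv ℝ f (y k)`.
  have hstrict := ((hf.hasStrictFDerivAt one_ne_zero).isLittleO.comp_tendsto hz).trans_isBigO
    (by simpa [Function.comp_def] using hstep)
  have hderiv : Tendsto (fun k => fderiv ℝ f x - fderiv ℝ f (y k)) l (𝓝 0) := by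
    simpa using tendsto_const_nhds (x := fderiv ℝ f x) |>.sub
      ((hf.continuousAt_fderiv one_ne_zero).tendsto.comp hy)
  have hcorr : (fun k => (fderiv ℝ f x - fderiv ℝ f (y k)) (t k • d k)) =o[l] t := by
    have hsmall := (isLittleO_one_iff ℝ).2 (by simpa using hderiv.norm)
    exact isBoundedBilinearMap_apply.isBigO_comp.trans_isLittleO
      (by simpa using hsmall.mul_isBigO hstep.norm_left)
  refine (hstrict.add hcorr).congr_left fun k => ?_
  simp only [Function.comp_apply, add_sub_cancel_left, sub_apply, map_smul, smul_sub]
  abel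

theorem frequently_lt_of_backtracking {E ι : Type*} [NormedAddCommGroup E] [NormedSpace ℝ E]
    {l : Filter ι} [l.NeBot] {f : E → ℝ} {x : E} (hf : ContDiffAt ℝ 1 f x) {y d : ι → E}
    (hy : Tendsto y l (𝓝 x)) (hd : IsBoundedUnder (· ≤ ·) l fun k => ‖d k‖)
    {G : ι → ℝ} {i : ι → ℕ} {β c : ℝ} (hβ : 0 < β) (hc : 0 < c)
    (hstep : Tendsto (fun k => β ^ i k * G k) l (𝓝 0))
    (hfail : ∀ k, i k ≠ 0 → c * β ^ (i k - 1) * G k <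
      f (y k + β ^ (i k - 1) • d k) - f (y k) - β ^ (i k - 1) * fderiv ℝ f (y k) (d k)) :
    ∀ ε > 0, ∃ᶠ k in l, G k < ε := by
  intro ε hε
  by_contra hsmall
  have hlarge : ∀ᶠ k in l, ε ≤ G k := (not_frequently.1 hsmall).mono fun _ => le_of_not_gt
  have hpow : Tendsto (fun k => β ^ i k) l (𝓝 0) := by
    refine squeeze_zero' (.of_forall fun k => by positivity) (hlarge.mono fun k hk => ?_)
      (by simpa using hstep.div_const ε)
    rw [le_div_iff₀ hε]
    exact mul_le_mul_of_nonneg_left hk (by positivity)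
  have hi : ∀ᶠ k in l, i k ≠ 0 :=
    (hpow.eventually (gt_mem_nhds one_pos)).mono fun k hk hik => by simp [hik] at hk
  have ht : Tendsto (fun k => β ^ (i k - 1)) l (𝓝 0) := by
    refine (by simpa using hpow.div_const β : Tendsto (fun k => β ^ i k / β) l (𝓝 0)).congr' ?_
    filter_upwards [hi] with k hk
    exact (eq_div_of_mul_eq hβ.ne' (pow_sub_one_mul hk β)).symm
  have hrem := (hf.isLittleO_sub_sub_fderiv_smul hy ht hd).bound (mul_pos hc hε)
  obtain ⟨k, hεk, hik, hremk⟩ := (hlarge.and (hi.and hrem)).exists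
  have htk : 0 ≤ β ^ (i k - 1) := by positivity
  rw [Real.norm_of_nonneg htk, smul_eq_mul, Real.norm_eq_abs] at hremk
  nlinarith [hfail k hik, (le_abs_self _).trans hremk,
    mul_le_mul_of_nonneg_left hεk (mul_nonneg hc.le htk)]

theorem Filter.liminf_eq_zero_of_nonneg_of_frequently_lt {ι : Type*} {l : Filter ι} {u : ι → ℝ}
    (h0 : ∀ᶠ k in l, 0 ≤ u k) (hsmall : ∀ ε > 0, ∃ᶠ k in l, u k < ε) : liminf u l = 0 := by
  refine le_antisymm (le_of_forall_pos_le_add fun ε hε => ?_) (le_liminf_of_le ?_ h0)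
  · rw [zero_add]
    exact liminf_le_of_frequently_le ((hsmall ε hε).mono fun _ => le_of_lt) ⟨0, h0⟩
  · refine ⟨1, fun a ha => ?_⟩
    obtain ⟨k, hk1, hak⟩ := ((hsmall 1 one_pos).and_eventually ha).exists
    exact (lt_of_le_of_lt hak hk1).le

theorem alg1_liminf_FWgap_along_subsequence_general
    {E : Type*} [NormedAddCommGroup E] [InnerProductSpace ℝ E] [FiniteDimensional ℝ E]
    (s : Set E) (hs_cl : IsClosed s) (hs_cv : Convex ℝ s)
    (g : E → ℝ) (hg_cv : ConvexOn ℝ s g)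
    (hg_sc : ∀ M : ℝ, ∃ R : ℝ, ∀ z ∈ s, R ≤ ‖z‖ → M ≤ g z / ‖z‖)
    (f : E → ℝ) (hf : ∃ u : Set E, IsOpen u ∧ s ⊆ u ∧ ContDiffOn ℝ 1 f u)
    (hF_bdd : BddBelow ((fun z => f z + g z) '' s))
    (β σ p : ℝ) (hβ : β ∈ Set.Ioo (0 : ℝ) 1) (hσ : σ ∈ Set.Ioo (0 : ℝ) 1)
    (hp : p ∈ Set.Ioc (0 : ℝ) 1)
    (x v d : ℕ → E) (ik : ℕ → ℕ) (Fs ps : ℕ → ℝ)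
    (hx0 : x 0 ∈ s)
    (hv : ∀ k, v k ∈ s ∧ ∀ w ∈ s,
      ⟪gradient f (x k), v k⟫ + g (v k) ≤ ⟪gradient f (x k), w⟫ + g w)
    (hd : ∀ k, d k = v k - x k)
    (hik : ∀ k,
      (f (x k + β ^ ik k • d k) + g (x k + β ^ ik k • d k)
          ≤ Fs k - σ * β ^ ik k * FWgap f g s (x k))
      ∧ ∀ j < ik k,
        ¬ (f (x k + β ^ j • d k) + g (x k + β ^ j • d k)
          ≤ Fs k - σ * β ^ j * FWgap f g s (x k)))
    (hxsucc : ∀ k, x (k + 1) = x k + β ^ ik k • d k)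
    (hF0 : Fs 0 = f (x 0) + g (x 0))
    (hps : ∀ k, ps (k + 1) ∈ Set.Icc p 1)
    (hFsucc : ∀ k, Fs (k + 1)
      = ps (k + 1) * (f (x (k + 1)) + g (x (k + 1))) + (1 - ps (k + 1)) * Fs k)
    (φ : ℕ → ℕ) (hφ : StrictMono φ)
    (xstar : E)
    (hconv : Filter.Tendsto (fun k => x (φ k)) Filter.atTop (nhds xstar)) :
    Filter.liminf (fun k => FWgap f g s (x (φ k))) Filter.atTop = 0 := by
  obtain ⟨u, hu, hsu, hfu⟩ := hf
  have hβpow (j : ℕ) : β ^ j ∈ Icc 0 1 := ⟨pow_nonneg hβ.1.le j, pow_le_one₀ hβ.1.le hβ.2.le⟩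
  have hxs (k : ℕ) : x k ∈ s := by
    induction k with
    | zero => exact hx0
    | succ k ih => rw [hxsucc, hd]; exact hs_cv.add_smul_sub_mem ih (hv k).1 (hβpow _)
  have hG0 (k : ℕ) : 0 ≤ FWgap f g s (x k) := FWgap_nonneg_of_forall_le (hxs k) (hv k).1 (hv k).2
  have hdecr (k : ℕ) : 0 ≤ σ * β ^ ik k * FWgap f g s (x k) :=
    mul_nonneg (mul_nonneg hσ.1.le (hβpow _).1) (hG0 k)
  have hdesc (k : ℕ) : f (x (k + 1)) + g (x (k + 1)) ≤ Fs k - σ * β ^ ik k * FWgap f g s (x k) :=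
    hxsucc k ▸ (hik k).1
  have hFs := le_of_nonmonotone_reference (Φ := fun k => f (x k) + g (x k)) hF0
    (fun k => (hps k).2) hdesc hdecr hFsucc
  have hstep : Tendsto (fun k => β ^ ik k * FWgap f g s (x k)) atTop (𝓝 0) := by
    have hbdd := hF_bdd.mono (range_subset_iff.2 fun k => mem_image_of_mem _ (hxs k))
    simpa [mul_assoc, hσ.1.ne'] using
      (tendsto_zero_of_nonmonotone_reference hbdd hp.1 hF0 hps hdesc hdecr hFsucc).const_mul σ⁻¹
  have hfx : ContDiffAt ℝ 1 f xstar :=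
    hfu.contDiffAt (hu.mem_nhds (hsu (hs_cl.mem_of_tendsto hconv (.of_forall fun k => hxs _))))
  have hgrad : Tendsto (fun k => gradient f (x (φ k))) atTop (𝓝 (gradient f xstar)) :=
    ((InnerProductSpace.toDual ℝ E).symm.continuous.continuousAt.comp
      (hfx.continuousAt_fderiv one_ne_zero)).tendsto.comp hconv
  have hvbdd := isBoundedUnder_norm_of_supercoercive hg_sc hgrad.norm.isBoundedUnder_le
    (fun k => (hv (φ k)).1) fun k => (hv (φ k)).2 _ hx0
  have hdbdd : IsBoundedUnder (· ≤ ·) atTop fun k => ‖d (φ k)‖ :=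
    (isBoundedUnder_le_add hvbdd hconv.norm.isBoundedUnder_le).mono_le
      (.of_forall fun k => by simpa [hd] using norm_sub_le _ _)
  refine liminf_eq_zero_of_nonneg_of_frequently_lt (.of_forall fun k => hG0 _)
    (frequently_lt_of_backtracking hfx hconv hdbdd hβ.1 (sub_pos.2 hσ.2)
      (hstep.comp hφ.tendsto_atTop) fun k hk => ?_)
  have hfail := not_le.1 ((hik (φ k)).2 _ (Nat.sub_lt (Nat.pos_of_ne_zero hk) one_pos))
  rw [FWgap_eq_of_forall_le (hv _).1 (hv _).2, hd] at hfail ⊢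
  rw [← InnerProductSpace.toDual_symm_apply]
  exact lt_remainder_of_armijo_fails hg_cv (hxs _) (hv _).1 (hβpow _) (hFs _) hfail

/-- If a subsequence `{x^k}_{k ∈ K}` of the iterates of Algorithm 1
converges to some point `x*`, then `liminf_{k→∞, k ∈ K} G(x^k) = 0`. -/
theorem alg1_liminf_FWgap_along_subsequence
    {E : Type*} [NormedAddCommGroup E] [InnerProductSpace ℝ E] [FiniteDimensional ℝ E]
    (s : Set E) (hs_ne : s.Nonempty) (hs_cl : IsClosed s) (hs_cv : Convex ℝ s)
    (g : E → ℝ) (hg_cv : ConvexOn ℝ s g) (hg_lsc : LowerSemicontinuousOn g s)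
    (hg_sc : ∀ M : ℝ, ∃ R : ℝ, ∀ z ∈ s, R ≤ ‖z‖ → M ≤ g z / ‖z‖)
    (f : E → ℝ) (hf : ∃ u : Set E, IsOpen u ∧ s ⊆ u ∧ ContDiffOn ℝ 1 f u)
    (hF_bdd : BddBelow ((fun z => f z + g z) '' s))
    (β σ p : ℝ) (hβ : β ∈ Set.Ioo (0 : ℝ) 1) (hσ : σ ∈ Set.Ioo (0 : ℝ) 1)
    (hp : p ∈ Set.Ioc (0 : ℝ) 1)
    (x v d : ℕ → E) (ik : ℕ → ℕ) (Fs ps : ℕ → ℝ)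
    (hx0 : x 0 ∈ s)
    (hv : ∀ k, v k ∈ s ∧ ∀ w ∈ s,
      ⟪gradient f (x k), v k⟫ + g (v k) ≤ ⟪gradient f (x k), w⟫ + g w)
    (hd : ∀ k, d k = v k - x k)
    (hik : ∀ k,
      (f (x k + β ^ ik k • d k) + g (x k + β ^ ik k • d k)
          ≤ Fs k - σ * β ^ ik k * FWgap f g s (x k))
      ∧ ∀ j < ik k,
        ¬ (f (x k + β ^ j • d k) + g (x k + β ^ j • d k)
          ≤ Fs k - σ * β ^ j * FWgap f g s (x k)))
    (hxsucc : ∀ k, x (k + 1) = x k + β ^ ik k • d k)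
    (hF0 : Fs 0 = f (x 0) + g (x 0))
    (hps : ∀ k, ps (k + 1) ∈ Set.Icc p 1)
    (hFsucc : ∀ k, Fs (k + 1)
      = ps (k + 1) * (f (x (k + 1)) + g (x (k + 1))) + (1 - ps (k + 1)) * Fs k)
    (φ : ℕ → ℕ) (hφ : StrictMono φ)
    (xstar : E)
    (hconv : Filter.Tendsto (fun k => x (φ k)) Filter.atTop (nhds xstar)) :
    Filter.liminf (fun k => FWgap f g s (x (φ k))) Filter.atTop = 0 :=
  alg1_liminf_FWgap_along_subsequence_general s hs_cl hs_cv g hg_cv hg_sc f hf hF_bdd β σ p hβ hσ hp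
    x v d ik Fs ps hx0 hv hd hik hxsucc hF0 hps hFsucc φ hφ xstar hconv
end

section
/- Let {x^k}, {τ_k} be generated by Algorithm 2. Then for all k ≥ 0 it holds that F(x^{k+1}) ≤ F(x^k) − (1/4) τ_k G(x^k); consequently, the sequence {F(x^k)} is monotonically nonincreasing, bounded from below by inf_{x ∈ s} F(x), and the whole sequence {x^k} is contained in the lower level set {x ∈ s : F(x) ≤ F(x⁰)}. -/
open scoped RealInnerProductSpace

/-- Candidate Lipschitz estimate `L^{(i)} = 2^{i−1} · L_prev`. -/
noncomputable def Lcand (Lprev : ℝ) (i : ℕ) : ℝ := 2 ^ i * Lprev / 2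

/-- Candidate stepsize `τ^{(i)} = min {1, G / (2 L^{(i)} ‖d‖²)}`. -/
noncomputable def tauCand (Gx Lprev nd2 : ℝ) (i : ℕ) : ℝ :=
  min 1 (Gx / (2 * Lcand Lprev i * nd2))

/-- **Proposition: basic properties of Algorithm 2.**
For all `k ≥ 0`, `F(x^{k+1}) ≤ F(x^k) − (1/4) τ_k G(x^k)`; consequently `{F(x^k)}` is
monotonically nonincreasing, bounded below by `inf_{x ∈ s} F(x)`, and every iterate lies
in the lower level set `{x ∈ s : F(x) ≤ F(x⁰)}`. -/
theorem alg2_descent_and_level_set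
    {E : Type*} [NormedAddCommGroup E] [InnerProductSpace ℝ E] [FiniteDimensional ℝ E]
    (s : Set E) (hs_ne : s.Nonempty) (hs_cl : IsClosed s) (hs_cv : Convex ℝ s)
    (g : E → ℝ) (hg_cv : ConvexOn ℝ s g) (hg_lsc : LowerSemicontinuousOn g s)
    (hg_sc : ∀ M : ℝ, ∃ R : ℝ, ∀ z ∈ s, R ≤ ‖z‖ → M ≤ g z / ‖z‖)
    (f : E → ℝ) (hf : ∃ u : Set E, IsOpen u ∧ s ⊆ u ∧ ContDiffOn ℝ 1 f u)
    (hF_bdd : BddBelow ((fun z => f z + g z) '' s))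
    (x v d : ℕ → E) (ik : ℕ → ℕ) (Lm τk : ℕ → ℝ)
    -- `Lm k` stands for `L_{k−1}` (so `Lm 0 = L_{−1} > 0` and `Lm (k+1) = L_k`).
    (hLm0 : 0 < Lm 0)
    (hx0 : x 0 ∈ s)
    (hv : ∀ k, v k ∈ s ∧ ∀ w ∈ s,
      ⟪gradient f (x k), v k⟫ + g (v k) ≤ ⟪gradient f (x k), w⟫ + g w)
    (hd : ∀ k, d k = v k - x k)
    (hGpos : ∀ k, 0 < FWgap f g s (x k))
    (hik : ∀ k,
      (f (x k + tauCand (FWgap f g s (x k)) (Lm k) (‖d k‖ ^ 2) (ik k) • d k)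
          + g (x k + tauCand (FWgap f g s (x k)) (Lm k) (‖d k‖ ^ 2) (ik k) • d k)
        ≤ (f (x k) + g (x k))
          - (1 / 2) * tauCand (FWgap f g s (x k)) (Lm k) (‖d k‖ ^ 2) (ik k)
              * FWgap f g s (x k)
          + (1 / 2) * Lcand (Lm k) (ik k)
              * (tauCand (FWgap f g s (x k)) (Lm k) (‖d k‖ ^ 2) (ik k)) ^ 2 * ‖d k‖ ^ 2)
      ∧ ∀ j < ik k,
        ¬ (f (x k + tauCand (FWgap f g s (x k)) (Lm k) (‖d k‖ ^ 2) j • d k)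
            + g (x k + tauCand (FWgap f g s (x k)) (Lm k) (‖d k‖ ^ 2) j • d k)
          ≤ (f (x k) + g (x k))
            - (1 / 2) * tauCand (FWgap f g s (x k)) (Lm k) (‖d k‖ ^ 2) j
                * FWgap f g s (x k)
            + (1 / 2) * Lcand (Lm k) j
                * (tauCand (FWgap f g s (x k)) (Lm k) (‖d k‖ ^ 2) j) ^ 2 * ‖d k‖ ^ 2))
    (hτ : ∀ k, τk k = tauCand (FWgap f g s (x k)) (Lm k) (‖d k‖ ^ 2) (ik k))
    (hLsucc : ∀ k, Lm (k + 1) = Lcand (Lm k) (ik k))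
    (hxsucc : ∀ k, x (k + 1) = x k + τk k • d k)
    :
    (∀ k, f (x (k + 1)) + g (x (k + 1))
        ≤ (f (x k) + g (x k)) - (1 / 4) * τk k * FWgap f g s (x k)) ∧
    (Antitone fun k => f (x k) + g (x k)) ∧
    (∀ k, sInf ((fun z => f z + g z) '' s) ≤ f (x k) + g (x k)) ∧
    (∀ k, x k ∈ {z ∈ s | f z + g z ≤ f (x 0) + g (x 0)}) := by
  
  -- positivity of Lm
  have hLpos : ∀ k, 0 < Lm k := by
    intro k
    induction k with
    | zero => exact hLm0
    | succ n ihn =>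
      rw [hLsucc n, Lcand]
      positivity
  -- basic bounds on τk
  have hτ01 : ∀ k, 0 ≤ τk k ∧ τk k ≤ 1 := by
    intro k
    rw [hτ k, tauCand]
    constructor
    · apply le_min zero_le_one
      apply div_nonneg (le_of_lt (hGpos k))
      have := hLpos (k + 1)
      rw [hLsucc k] at this
      positivity
    · exact min_le_left _ _
  -- key quadratic bound
  have hkey : ∀ k, (1 / 2) * Lcand (Lm k) (ik k) * (τk k) ^ 2 * ‖d k‖ ^ 2
      ≤ (1 / 4) * τk k * FWgap f g s (x k) := by
    intro k
    have hL : 0 < Lcand (Lm k) (ik k) := by rw [← hLsucc k]; exact hLpos (k + 1)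
    have hτ0 := (hτ01 k).1
    have hG := hGpos k
    rcases eq_or_lt_of_le (sq_nonneg ‖d k‖) with hnd | hnd
    · rw [← hnd]
      have : 0 ≤ (1 / 4) * τk k * FWgap f g s (x k) := by positivity
      linarith
    · have hden : 0 < 2 * Lcand (Lm k) (ik k) * ‖d k‖ ^ 2 := by positivity
      have hle : τk k ≤ FWgap f g s (x k) / (2 * Lcand (Lm k) (ik k) * ‖d k‖ ^ 2) := by
        rw [hτ k, tauCand]; exact min_le_right _ _
      have hmul : τk k * (2 * Lcand (Lm k) (ik k) * ‖d k‖ ^ 2) ≤ FWgap f g s (x k) :=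
        (le_div_iff₀ hden).mp hle
      nlinarith [mul_le_mul_of_nonneg_left hmul hτ0]
  -- descent inequality
  have hdesc : ∀ k, f (x (k + 1)) + g (x (k + 1))
      ≤ (f (x k) + g (x k)) - (1 / 4) * τk k * FWgap f g s (x k) := by
    intro k
    have h1 := (hik k).1
    rw [← hτ k, ← hxsucc k] at h1
    have := hkey k
    linarith
  have hτGnn : ∀ k, 0 ≤ (1 / 4) * τk k * FWgap f g s (x k) := by
    intro k
    have := (hτ01 k).1
    have := (hGpos k).le
    positivity
  have hmono : Antitone fun k => f (x k) + g (x k) := by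
    apply antitone_nat_of_succ_le
    intro k
    have := hdesc k
    have := hτGnn k
    linarith
  -- iterates stay in s
  have hxs : ∀ k, x k ∈ s := by
    intro k
    induction k with
    | zero => exact hx0
    | succ n ihn =>
      have hτ0 := (hτ01 n).1
      have hτ1 := (hτ01 n).2
      have hmem := hs_cv ihn (hv n).1 (by linarith : (0:ℝ) ≤ 1 - τk n) hτ0
        (by ring : (1 - τk n) + τk n = 1)
      have : x (n + 1) = (1 - τk n) • x n + τk n • v n := by
        rw [hxsucc n, hd n]
        module
      rw [this]
      exact hmem
  refine ⟨hdesc, hmono, ?_, ?_⟩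
  · intro k
    exact csInf_le hF_bdd ⟨x k, hxs k, rfl⟩
  · intro k
    exact ⟨hxs k, hmono (Nat.zero_le k)⟩
end

section
/- Let {x^k} and {v^k} be generated by Algorithm 2, and suppose a subsequence {x^k}_{k ∈ K} converges to some point x* ∈ s. Then the corresponding subsequence {v^k}_{k ∈ K} is bounded. -/
open scoped RealInnerProductSpace

/-- If a subsequence `{x^k}_{k ∈ K}` of the iterates of Algorithm 2
converges to some point `x* ∈ s`, then the corresponding subsequence `{v^k}_{k ∈ K}` is
bounded. -/
theorem alg2_subproblem_solutions_bounded_along_subsequence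
    {E : Type*} [NormedAddCommGroup E] [InnerProductSpace ℝ E] [FiniteDimensional ℝ E]
    (s : Set E) (hs_ne : s.Nonempty) (hs_cl : IsClosed s) (hs_cv : Convex ℝ s)
    (g : E → ℝ) (hg_cv : ConvexOn ℝ s g) (hg_lsc : LowerSemicontinuousOn g s)
    (hg_sc : ∀ M : ℝ, ∃ R : ℝ, ∀ z ∈ s, R ≤ ‖z‖ → M ≤ g z / ‖z‖)
    (f : E → ℝ) (hf : ∃ u : Set E, IsOpen u ∧ s ⊆ u ∧ ContDiffOn ℝ 1 f u)
    (hF_bdd : BddBelow ((fun z => f z + g z) '' s))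
    (x v d : ℕ → E) (ik : ℕ → ℕ) (Lm τk : ℕ → ℝ)
    -- `Lm k` stands for `L_{k−1}` (so `Lm 0 = L_{−1} > 0` and `Lm (k+1) = L_k`).
    (hLm0 : 0 < Lm 0)
    (hx0 : x 0 ∈ s)
    (hv : ∀ k, v k ∈ s ∧ ∀ w ∈ s,
      ⟪gradient f (x k), v k⟫ + g (v k) ≤ ⟪gradient f (x k), w⟫ + g w)
    (hd : ∀ k, d k = v k - x k)
    (hGpos : ∀ k, 0 < FWgap f g s (x k))
    (hik : ∀ k,
      (f (x k + tauCand (FWgap f g s (x k)) (Lm k) (‖d k‖ ^ 2) (ik k) • d k)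
          + g (x k + tauCand (FWgap f g s (x k)) (Lm k) (‖d k‖ ^ 2) (ik k) • d k)
        ≤ (f (x k) + g (x k))
          - (1 / 2) * tauCand (FWgap f g s (x k)) (Lm k) (‖d k‖ ^ 2) (ik k)
              * FWgap f g s (x k)
          + (1 / 2) * Lcand (Lm k) (ik k)
              * (tauCand (FWgap f g s (x k)) (Lm k) (‖d k‖ ^ 2) (ik k)) ^ 2 * ‖d k‖ ^ 2)
      ∧ ∀ j < ik k,
        ¬ (f (x k + tauCand (FWgap f g s (x k)) (Lm k) (‖d k‖ ^ 2) j • d k)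
            + g (x k + tauCand (FWgap f g s (x k)) (Lm k) (‖d k‖ ^ 2) j • d k)
          ≤ (f (x k) + g (x k))
            - (1 / 2) * tauCand (FWgap f g s (x k)) (Lm k) (‖d k‖ ^ 2) j
                * FWgap f g s (x k)
            + (1 / 2) * Lcand (Lm k) j
                * (tauCand (FWgap f g s (x k)) (Lm k) (‖d k‖ ^ 2) j) ^ 2 * ‖d k‖ ^ 2))
    (hτ : ∀ k, τk k = tauCand (FWgap f g s (x k)) (Lm k) (‖d k‖ ^ 2) (ik k))
    (hLsucc : ∀ k, Lm (k + 1) = Lcand (Lm k) (ik k))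
    (hxsucc : ∀ k, x (k + 1) = x k + τk k • d k)
    (φ : ℕ → ℕ) (hφ : StrictMono φ)
    (xstar : E) (hxstar : xstar ∈ s)
    (hconv : Filter.Tendsto (fun k => x (φ k)) Filter.atTop (nhds xstar)) :
    ∃ C : ℝ, ∀ k, ‖v (φ k)‖ ≤ C := by
  classical
  obtain ⟨u, hu_open, hsu, hcd⟩ := hf
  have hgrad_cont : ContinuousOn (fun z => gradient f z) u := by
    have h1 : ContinuousOn (fderiv ℝ f) u := hcd.continuousOn_fderiv_of_isOpen hu_open le_rfl
    exact ((InnerProductSpace.toDual ℝ E).symm.continuous.comp_continuousOn h1)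
  have hca : ContinuousAt (fun z => gradient f z) xstar :=
    hgrad_cont.continuousAt (hu_open.mem_nhds (hsu hxstar))
  have hgt : Filter.Tendsto (fun k => gradient f (x (φ k))) Filter.atTop
      (nhds (gradient f xstar)) := hca.tendsto.comp hconv
  obtain ⟨A, hA⟩ := hgt.norm.bddAbove_range
  have hAk : ∀ k, ‖gradient f (x (φ k))‖ ≤ A := fun k => hA ⟨k, rfl⟩
  have hA0 : (0:ℝ) ≤ A := le_trans (norm_nonneg _) (hAk 0)
  obtain ⟨R, hR⟩ := hg_sc (A + 1)
  set B := A * ‖x 0‖ + g (x 0) - g (x 0) + g (x 0) with hBdef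
  refine ⟨max (max R 1) (A * ‖x 0‖ + g (x 0)), fun k => ?_⟩
  by_cases hbig : max R 1 ≤ ‖v (φ k)‖
  · have hvpos : (0:ℝ) < ‖v (φ k)‖ :=
      lt_of_lt_of_le one_pos (le_trans (le_max_right R 1) hbig)
    have hgv : A + 1 ≤ g (v (φ k)) / ‖v (φ k)‖ :=
      hR (v (φ k)) (hv (φ k)).1 (le_trans (le_max_left R 1) hbig)
    have hgv' : (A + 1) * ‖v (φ k)‖ ≤ g (v (φ k)) := (le_div_iff₀ hvpos).mp hgv
    have hmin := (hv (φ k)).2 (x 0) hx0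
    have hip1 : ⟪gradient f (x (φ k)), x 0⟫ ≤ A * ‖x 0‖ := by
      have h1 := real_inner_le_norm (gradient f (x (φ k))) (x 0)
      have := mul_le_mul_of_nonneg_right (hAk k) (norm_nonneg (x 0))
      linarith
    have hip2 : -(A * ‖v (φ k)‖) ≤ ⟪gradient f (x (φ k)), v (φ k)⟫ := by
      have h1 := abs_real_inner_le_norm (gradient f (x (φ k))) (v (φ k))
      have h2 := neg_abs_le (⟪gradient f (x (φ k)), v (φ k)⟫)
      have := mul_le_mul_of_nonneg_right (hAk k) (norm_nonneg (v (φ k)))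
      linarith
    have : ‖v (φ k)‖ ≤ A * ‖x 0‖ + g (x 0) := by linarith
    exact le_trans this (le_max_right _ _)
  · push_neg at hbig
    exact le_trans hbig.le (le_max_left _ _)
end
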